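/- arXiv:2407.19538 — 4 statements merged into one kernel-verified Lean document; each statement's English description precedes it below -/
import Mathlib

section
/- Let n ≥ 2, 0 < λ ≤ Λ, and γ ≥ (n−1)Λ/λ. Then the function ψ(x) = γ^{−1}·r^{γ+1}·(|x−x₀|^{−γ} − r^{−γ}) satisfies: ψ > 0 on B_r(x₀)\{x₀}, ψ = 0 on ∂B_r(x₀), |∇ψ| = 1 on ∂B_r(x₀), and M⁻_{λ,Λ}(D²ψ) > 0 for 0 < |x−x₀| < 2r. -/
open Matrix

noncomputable def pucciInf {n : ℕ} (lam Lam : ℝ) (A : Matrix (Fin n) (Fin n) ℝ) : ℝ :=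
  if hA : A.IsHermitian then
    lam * ∑ i, max (hA.eigenvalues i) 0 + Lam * ∑ i, min (hA.eigenvalues i) 0
  else 0

noncomputable def hessianMatrix {n : ℕ} (f : EuclideanSpace ℝ (Fin n) → ℝ)
    (x : EuclideanSpace ℝ (Fin n)) : Matrix (Fin n) (Fin n) ℝ :=
  fun i j => iteratedFDeriv ℝ 2 f x ![EuclideanSpace.single i 1, EuclideanSpace.single j 1]

section Aux


lemma sum_eigenvalues_eq_trace' {n : ℕ} {M : Matrix (Fin n) (Fin n) ℝ} (hM : M.IsHermitian) :
    ∑ i, hM.eigenvalues i = M.trace := by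
  rw [hM.trace_eq_sum_eigenvalues]
  simp

/-- Pucci inf of `B•I + A w wᵀ`. -/
lemma pucci_rank_one {n : ℕ} (hn : 2 ≤ n) (lam Lam : ℝ) (hlam : 0 < lam)
    (A B ρ2 : ℝ) (w : Fin n → ℝ) (hw : ∑ i, w i * w i = ρ2)
    (hB : B < 0) (ha : 0 < B + A * ρ2) :
    pucciInf lam Lam (fun i j => A * w i * w j + B * (if i = j then 1 else 0))
      = lam * (B + A * ρ2) + Lam * ((n : ℝ) - 1) * B := by
  set a : ℝ := B + A * ρ2 with ha_def
  set M : Matrix (Fin n) (Fin n) ℝ := fun i j => A * w i * w j + B * (if i = j then 1 else 0)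
    with hM_def
  have hherm : M.IsHermitian := by
    ext i j
    show star (M j i) = M i j
    simp only [Matrix.conjTranspose_apply, hM_def, star_trivial]
    rcases eq_or_ne i j with h | h
    · simp [h]
    · simp [h, Ne.symm h]; ring
  -- each eigenvalue is a or B
  have hmem : ∀ i, hherm.eigenvalues i = a ∨ hherm.eigenvalues i = B := by
    intro i
    set u : Fin n → ℝ := ⇑(hherm.eigenvectorBasis i) with hu
    have hune : u ≠ 0 := by
      simpa [hu] using hherm.eigenvectorBasis.orthonormal.ne_zero i
    have heig : M *ᵥ u = hherm.eigenvalues i • u := hherm.mulVec_eigenvectorBasis i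
    set e := hherm.eigenvalues i with he
    set d : ℝ := ∑ j, w j * u j with hd
    have hkey : ∀ k, B * u k + A * w k * d = e * u k := by
      intro k
      have h0 := congrFun heig k
      simp only [Matrix.mulVec, dotProduct, hM_def, Pi.smul_apply, smul_eq_mul] at h0
      rw [← h0]
      have : ∀ j, (A * w k * w j + B * (if k = j then 1 else 0)) * u j
          = (A * w k) * (w j * u j) + B * ((if k = j then 1 else 0) * u j) := fun j => by ring
      rw [Finset.sum_congr rfl fun j _ => this j, Finset.sum_add_distrib, ← Finset.mul_sum,
        ← Finset.mul_sum, ← hd]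
      have : ∑ j, (if k = j then (1:ℝ) else 0) * u j = u k := by
        rw [Finset.sum_congr rfl (fun j (_ : j ∈ Finset.univ) => by
          rw [ite_mul, one_mul, zero_mul])]
        exact (Finset.sum_ite_eq Finset.univ k u).trans (if_pos (Finset.mem_univ k))
      rw [this]; ring
    rcases eq_or_ne d 0 with hd0 | hd0
    · right
      by_contra hne
      apply hune
      funext k
      have h1 := hkey k
      rw [hd0] at h1
      have h2 : (B - e) * u k = 0 := by linarith
      rcases mul_eq_zero.mp h2 with h | h
      · exact absurd (by linarith : e = B) hne
      · simpa using h
    · left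
      have hsum : B * d + A * ρ2 * d = e * d := by
        have h2 : ∑ k, w k * (B * u k + A * w k * d) = ∑ k, w k * (e * u k) :=
          Finset.sum_congr rfl fun k _ => by rw [hkey k]
        have h3 : ∀ k, w k * (B * u k + A * w k * d) = B * (w k * u k) + (A * d) * (w k * w k) :=
          fun k => by ring
        have h4 : ∀ k, w k * (e * u k) = e * (w k * u k) := fun k => by ring
        rw [Finset.sum_congr rfl fun k _ => h3 k, Finset.sum_congr rfl fun k _ => h4 k,
          Finset.sum_add_distrib, ← Finset.mul_sum, ← Finset.mul_sum, ← Finset.mul_sum,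
          ← hd, hw] at h2
        linarith
      have : (B + A * ρ2 - e) * d = 0 := by ring_nf; ring_nf at hsum; linarith
      rcases mul_eq_zero.mp this with h | h
      · rw [ha_def]; linarith
      · exact absurd h hd0
  -- trace
  have htr : ∑ i, hherm.eigenvalues i = (n : ℝ) * B + A * ρ2 := by
    rw [sum_eigenvalues_eq_trace']
    simp only [Matrix.trace, Matrix.diag, hM_def, if_pos rfl, mul_one]
    rw [Finset.sum_add_distrib, ← Finset.mul_sum]
    have : ∑ i, A * w i * w i = A * ρ2 := by
      rw [← hw, Finset.mul_sum]; exact Finset.sum_congr rfl fun i _ => by ring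
    rw [this, Finset.sum_const]
    simp only [Finset.card_univ, Fintype.card_fin, nsmul_eq_mul, if_true]
    ring
  -- counting
  classical
  set S := Finset.univ.filter (fun i => hherm.eigenvalues i = a) with hS
  have hSc : ∀ i ∈ S, hherm.eigenvalues i = a := fun i hi => (Finset.mem_filter.mp hi).2
  have hScc : ∀ i ∈ Finset.univ \ S, hherm.eigenvalues i = B := by
    intro i hi
    rcases hmem i with h | h
    · exfalso
      rw [Finset.mem_sdiff, hS, Finset.mem_filter] at hi
      exact hi.2 ⟨Finset.mem_univ i, h⟩
    · exact h
  have hcard : (S.card : ℝ) * a + ((n : ℝ) - S.card) * B = (n : ℝ) * B + A * ρ2 := by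
    rw [← htr, ← Finset.sum_sdiff (Finset.filter_subset _ Finset.univ : S ⊆ Finset.univ)]
    have hle : S.card ≤ n := by
      simpa using Finset.card_filter_le Finset.univ (fun i => hherm.eigenvalues i = a)
    rw [Finset.sum_congr rfl hScc, Finset.sum_congr rfl hSc, Finset.sum_const,
      Finset.sum_const, Finset.card_sdiff_of_subset (Finset.filter_subset _ _), Finset.card_univ,
      Fintype.card_fin, nsmul_eq_mul, nsmul_eq_mul, Nat.cast_sub hle]
    ring
  have hk : S.card = 1 := by
    have hAρ : A * ρ2 = a - B := by rw [ha_def]; ring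
    have : ((S.card : ℝ) - 1) * (a - B) = 0 := by rw [← hAρ]; ring_nf; ring_nf at hcard; linarith
    have hab : a - B ≠ 0 := by intro h; linarith
    have := (mul_eq_zero.mp this).resolve_right hab
    have : (S.card : ℝ) = 1 := by linarith
    exact_mod_cast this
  -- compute pucciInf
  rw [pucciInf, dif_pos hherm]
  have hmax : ∑ i, max (hherm.eigenvalues i) 0 = a := by
    rw [← Finset.sum_sdiff (Finset.filter_subset _ Finset.univ : S ⊆ Finset.univ)]
    have h1 : ∀ i ∈ Finset.univ \ S, max (hherm.eigenvalues i) 0 = 0 := by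
      intro i hi; rw [hScc i hi]; exact max_eq_right hB.le
    have h2 : ∀ i ∈ S, max (hherm.eigenvalues i) 0 = a := by
      intro i hi; rw [hSc i hi]; exact max_eq_left ha.le
    rw [Finset.sum_congr rfl h1, Finset.sum_congr rfl h2, Finset.sum_const_zero,
      Finset.sum_const, hk]
    simp
  have hmin : ∑ i, min (hherm.eigenvalues i) 0 = ((n : ℝ) - 1) * B := by
    rw [← Finset.sum_sdiff (Finset.filter_subset _ Finset.univ : S ⊆ Finset.univ)]
    have h1 : ∀ i ∈ Finset.univ \ S, min (hherm.eigenvalues i) 0 = B := by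
      intro i hi; rw [hScc i hi]; exact min_eq_left hB.le
    have h2 : ∀ i ∈ S, min (hherm.eigenvalues i) 0 = 0 := by
      intro i hi; rw [hSc i hi]; exact min_eq_right ha.le
    rw [Finset.sum_congr rfl h1, Finset.sum_congr rfl h2, Finset.sum_const_zero,
      Finset.sum_const, Finset.card_sdiff_of_subset (Finset.filter_subset _ _), Finset.card_univ,
      Fintype.card_fin, hk, add_zero, nsmul_eq_mul]
    push_cast [Nat.cast_sub (by omega : 1 ≤ n)]
    ring
  rw [hmax, hmin, ha_def]
  ring



variable {n : ℕ}

noncomputable def innerCLM (n : ℕ) :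
    EuclideanSpace ℝ (Fin n) →L[ℝ] EuclideanSpace ℝ (Fin n) →L[ℝ] ℝ := innerSL ℝ

@[simp] lemma innerCLM_apply (u v : EuclideanSpace ℝ (Fin n)) :
    innerCLM n u v = inner ℝ u v := rfl

local notation "E" n => EuclideanSpace ℝ (Fin n)

lemma hasFDerivAt_rpow_normsq (x₀ x : EuclideanSpace ℝ (Fin n)) (hx : x ≠ x₀) (p κ : ℝ) :
    HasFDerivAt (fun y : EuclideanSpace ℝ (Fin n) => κ * (‖y - x₀‖ ^ 2 : ℝ) ^ p)
      ((2 * κ * p * (‖x - x₀‖ ^ 2 : ℝ) ^ (p - 1)) • innerSL ℝ (x - x₀)) x := by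
  have h1 : HasFDerivAt (fun y : EuclideanSpace ℝ (Fin n) => y - x₀)
      (ContinuousLinearMap.id ℝ (EuclideanSpace ℝ (Fin n))) x :=
    (hasFDerivAt_id x).sub_const x₀
  have hQ : HasFDerivAt (fun y : EuclideanSpace ℝ (Fin n) => ‖y - x₀‖ ^ 2)
      (2 • innerSL ℝ (x - x₀)) x := by
    simpa using h1.norm_sq
  have hne : (‖x - x₀‖ ^ 2 : ℝ) ≠ 0 := by
    exact pow_ne_zero 2 (norm_ne_zero_iff.mpr (sub_ne_zero.mpr hx))
  have h2 := (hQ.rpow_const (p := p) (Or.inl hne)).const_mul κ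
  refine h2.congr_fderiv ?_
  ext v
  simp only [ContinuousLinearMap.smul_apply, ContinuousLinearMap.coe_smul', Pi.smul_apply,
    smul_eq_mul]
  ring

lemma hasFDerivAt_grad_map (x₀ x : EuclideanSpace ℝ (Fin n)) (hx : x ≠ x₀) (κ p : ℝ) :
    HasFDerivAt (fun y : EuclideanSpace ℝ (Fin n) =>
        (κ * (‖y - x₀‖ ^ 2 : ℝ) ^ p) • innerSL ℝ (y - x₀))
      ((κ * (‖x - x₀‖ ^ 2 : ℝ) ^ p) • innerCLM n +
        ((2 * κ * p * (‖x - x₀‖ ^ 2 : ℝ) ^ (p - 1)) • innerSL ℝ (x - x₀)).smulRight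
          (innerSL ℝ (x - x₀))) x := by
  have hs := hasFDerivAt_rpow_normsq x₀ x hx p κ
  have hT : HasFDerivAt (fun y : EuclideanSpace ℝ (Fin n) => innerSL ℝ (y - x₀))
      (innerCLM n) x := by
    have := ((innerCLM n).hasFDerivAt (x := id x - x₀)).comp x
      ((hasFDerivAt_id x).sub_const x₀)
    exact this
  exact hs.smul hT


end Aux

set_option maxHeartbeats 2000000 in
theorem radial_barrier_properties
    (n : ℕ) (hn : 2 ≤ n) (lam Lam : ℝ) (hlam : 0 < lam) (hle : lam ≤ Lam)
    (γ : ℝ) (hγ : (n - 1 : ℝ) * Lam / lam ≤ γ)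
    (r : ℝ) (hr : 0 < r) (x₀ : EuclideanSpace ℝ (Fin n)) :
    let ψ : EuclideanSpace ℝ (Fin n) → ℝ :=
      fun x => γ⁻¹ * r ^ (γ + 1) * (‖x - x₀‖ ^ (-γ) - r ^ (-γ))
    (∀ x, x ∈ Metric.ball x₀ r → x ≠ x₀ → 0 < ψ x) ∧
    (∀ x, x ∈ Metric.sphere x₀ r → ψ x = 0) ∧
    (∀ x, x ∈ Metric.sphere x₀ r → ‖gradient ψ x‖ = 1) ∧
    (∀ x, 0 < ‖x - x₀‖ → ‖x - x₀‖ < 2 * r →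
      0 < pucciInf lam Lam (hessianMatrix ψ x)) := by
  intro ψ
  set c : ℝ := γ⁻¹ * r ^ (γ + 1) with hc_def
  set p : ℝ := -γ / 2 with hp_def
  -- basic positivity facts
  have hn1 : (1 : ℝ) ≤ (n : ℝ) - 1 := by
    have : (2 : ℝ) ≤ (n : ℝ) := by exact_mod_cast hn
    linarith
  have hγ1 : 1 ≤ γ := by
    have h1 : (1 : ℝ) ≤ (n - 1 : ℝ) * Lam / lam := by
      rw [le_div_iff₀ hlam]
      nlinarith
    linarith
  have hγ0 : 0 < γ := by linarith
  have hc : 0 < c := by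
    rw [hc_def]
    exact mul_pos (inv_pos.mpr hγ0) (Real.rpow_pos_of_pos hr _)
  have hψ_def : ψ = fun x => c * (‖x - x₀‖ ^ (-γ) - r ^ (-γ)) := rfl
  -- rewrite ψ via rpow of the squared norm
  have hsq : ∀ z : EuclideanSpace ℝ (Fin n), (‖z‖ ^ 2 : ℝ) ^ p = ‖z‖ ^ (-γ) := by
    intro z
    rw [← Real.rpow_natCast ‖z‖ 2, ← Real.rpow_mul (norm_nonneg z)]
    push_cast
    congr 1
    rw [hp_def]; ring
  have hψeq : ψ = fun y => c * (‖y - x₀‖ ^ 2 : ℝ) ^ p - c * r ^ (-γ) := by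
    funext y
    rw [hψ_def, hsq (y - x₀)]
    ring
  refine ⟨?_, ?_, ?_, ?_⟩
  -- positivity in the punctured ball
  · intro x hx hne
    have h1 : ‖x - x₀‖ < r := by
      rwa [Metric.mem_ball, dist_eq_norm] at hx
    have h0 : 0 < ‖x - x₀‖ := norm_pos_iff.mpr (sub_ne_zero.mpr hne)
    have h2 : r ^ (-γ) < ‖x - x₀‖ ^ (-γ) :=
      Real.rpow_lt_rpow_of_neg h0 h1 (by linarith)
    rw [hψ_def]
    exact mul_pos hc (by linarith)
  -- zero on the sphere
  · intro x hx
    have h1 : ‖x - x₀‖ = r := by rwa [mem_sphere_iff_norm] at hx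
    rw [hψ_def]
    simp [h1]
  -- gradient has norm one on the sphere
  · intro x hx
    have h1 : ‖x - x₀‖ = r := by rwa [mem_sphere_iff_norm] at hx
    have hxne : x ≠ x₀ := by
      intro h; rw [h, sub_self, norm_zero] at h1; exact hr.ne' h1.symm
    set k : ℝ := 2 * c * p * (‖x - x₀‖ ^ 2 : ℝ) ^ (p - 1) with hk_def
    have hF : HasFDerivAt ψ (k • innerSL ℝ (x - x₀)) x := by
      rw [hψeq]
      exact (hasFDerivAt_rpow_normsq x₀ x hxne p c).sub_const _
    have hG : HasGradientAt ψ (k • (x - x₀)) x := by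
      rw [hasGradientAt_iff_hasFDerivAt]
      refine hF.congr_fderiv (Eq.symm ?_)
      ext v
      simp only [InnerProductSpace.toDual_apply_apply, ContinuousLinearMap.smul_apply,
        innerSL_apply_apply, smul_eq_mul]
      exact real_inner_smul_left (x - x₀) v k
    rw [hG.gradient, norm_smul, h1, Real.norm_eq_abs]
    have hrge : ((r : ℝ) ^ 2 : ℝ) ^ (p - 1) = r ^ (-γ - 2) := by
      rw [← Real.rpow_natCast r 2, ← Real.rpow_mul hr.le]
      congr 1
      rw [hp_def]; ring
    have hkval : k = -(c * γ * r ^ (-γ - 2)) := by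
      rw [hk_def, h1, hrge, hp_def]; ring
    rw [hkval, abs_neg, abs_of_pos (by positivity)]
    have hcγ : c * γ = r ^ (γ + 1) := by
      rw [hc_def]; field_simp
    have h4 : r ^ (-γ - 2) * r = r ^ (-γ - 1) := by
      rw [← Real.rpow_add_one hr.ne' (-γ - 2)]
      congr 1; ring
    rw [mul_assoc, h4, hcγ, ← Real.rpow_add hr,
      show γ + 1 + (-γ - 1) = 0 by ring, Real.rpow_zero]
  -- Pucci operator positivity
  · intro x h0 h2r
    have hxne : x ≠ x₀ := by
      intro h; rw [h] at h0; simp at h0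
    set ρ2 : ℝ := ‖x - x₀‖ ^ 2 with hρ2_def
    have hρ2 : 0 < ρ2 := by positivity
    set κ : ℝ := 2 * c * p with hκ_def
    set A : ℝ := 2 * κ * (p - 1) * ρ2 ^ (p - 1 - 1) with hA_def
    set B : ℝ := κ * ρ2 ^ (p - 1) with hB_def
    set w : Fin n → ℝ := fun i => (x - x₀) i with hw_def
    -- the hessian matrix
    have hfe : ∀ y : EuclideanSpace ℝ (Fin n), y ≠ x₀ → fderiv ℝ ψ y
        = (κ * (‖y - x₀‖ ^ 2 : ℝ) ^ (p - 1)) • innerSL ℝ (y - x₀) := by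
      intro y hy
      have hF : HasFDerivAt ψ
          ((2 * c * p * (‖y - x₀‖ ^ 2 : ℝ) ^ (p - 1)) • innerSL ℝ (y - x₀)) y := by
        rw [hψeq]
        exact (hasFDerivAt_rpow_normsq x₀ y hy p c).sub_const _
      rw [hF.fderiv, hκ_def]
    have hev : fderiv ℝ ψ =ᶠ[nhds x]
        fun y => (κ * (‖y - x₀‖ ^ 2 : ℝ) ^ (p - 1)) • innerSL ℝ (y - x₀) := by
      filter_upwards [IsOpen.mem_nhds isOpen_compl_singleton hxne] with y hy
      exact hfe y hy
    have hΦ := hasFDerivAt_grad_map x₀ x hxne κ (p - 1)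
    have hfd2 : fderiv ℝ (fderiv ℝ ψ) x
        = (κ * (‖x - x₀‖ ^ 2 : ℝ) ^ (p - 1)) • innerCLM n +
          ((2 * κ * (p - 1) * (‖x - x₀‖ ^ 2 : ℝ) ^ (p - 1 - 1)) • innerSL ℝ (x - x₀)).smulRight
            (innerSL ℝ (x - x₀)) := by
      rw [hev.fderiv_eq, hΦ.fderiv]
    have hH : hessianMatrix ψ x = fun i j => A * w i * w j + B * (if i = j then 1 else 0) := by
      funext i j
      show iteratedFDeriv ℝ 2 ψ x ![EuclideanSpace.single i 1, EuclideanSpace.single j 1] = _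
      rw [iteratedFDeriv_two_apply, hfd2]
      simp only [Matrix.cons_val_zero, Matrix.cons_val_one, Matrix.head_cons,
        ContinuousLinearMap.add_apply, ContinuousLinearMap.smul_apply,
        ContinuousLinearMap.smulRight_apply, innerCLM_apply, innerSL_apply_apply, smul_eq_mul,
        EuclideanSpace.inner_single_right, RCLike.star_def, starRingEnd_apply, star_trivial,
        one_mul, EuclideanSpace.single_apply, hA_def, hB_def, hw_def, hρ2_def]
      rcases eq_or_ne i j with h | h
      · simp [h]; ring
      · simp [h, Ne.symm h]
    have hwsum : ∑ i, w i * w i = ρ2 := by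
      have := real_inner_self_eq_norm_sq (x - x₀)
      rw [hρ2_def, ← this]
      rw [PiLp.inner_apply]
      rfl
    have hκneg : κ < 0 := by
      rw [hκ_def, hp_def]
      have : 2 * c * (-γ / 2) = -(c * γ) := by ring
      rw [this]
      simp only [neg_neg, Left.neg_neg_iff]
      positivity
    have hBneg : B < 0 := mul_neg_of_neg_of_pos hκneg (Real.rpow_pos_of_pos hρ2 _)
    have hstep : ρ2 ^ (p - 1 - 1) * ρ2 = ρ2 ^ (p - 1) := by
      rw [← Real.rpow_add_one (ne_of_gt hρ2)]
      congr 1; ring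
    have haval : B + A * ρ2 = c * γ * (γ + 1) * ρ2 ^ (p - 1) := by
      rw [hB_def, hA_def, mul_assoc (2 * κ * (p - 1)), hstep, hκ_def, hp_def]
      ring
    have hapos : 0 < B + A * ρ2 := by
      rw [haval]
      positivity
    rw [hH, pucci_rank_one hn lam Lam hlam A B ρ2 w hwsum hBneg hapos]
    rw [haval, hB_def, hκ_def]
    have hγlam : ((n : ℝ) - 1) * Lam ≤ γ * lam := (div_le_iff₀ hlam).mp hγ
    have hX : (0:ℝ) < ρ2 ^ (p - 1) := Real.rpow_pos_of_pos hρ2 _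
    have key : lam * (c * γ * (γ + 1) * ρ2 ^ (p - 1)) + Lam * ((n:ℝ) - 1) * (2 * c * p * ρ2 ^ (p - 1))
        = c * ρ2 ^ (p - 1) * (lam * γ * (γ + 1) - γ * (((n:ℝ) - 1) * Lam)) := by
      rw [hp_def]; ring
    rw [key]
    apply mul_pos (by positivity)
    have hLam : 0 < Lam := lt_of_lt_of_le hlam hle
    nlinarith
end

section
/- Let K ⊂ ℝⁿ be an open convex set with 0 ∈ ∂K containing a ball B_δ(y) with |y| = 1, δ > 0. Let u ∈ C(closure(K ∩ B₁)) be a viscosity subsolution in the class \underline{S}_Λ(K ∩ B₁) (i.e. M⁺_{λ/n,Λ}(D²u) ≥ 0 in K ∩ B₁ and u_ν ≥ 0 on ∂K ∩ B₁ in the viscosity sense). If u ≤ 0 on ∂B₁ ∩ closure(K), then u ≤ 0 on closure(K ∩ B₁). -/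
open scoped RealInnerProductSpace

noncomputable def pucciSup {n : ℕ} (lam Lam : ℝ) (A : Matrix (Fin n) (Fin n) ℝ) : ℝ :=
  if hA : A.IsHermitian then
    Lam * ∑ i, max (hA.eigenvalues i) 0 + lam * ∑ i, min (hA.eigenvalues i) 0
  else 0

/-- `φ` touches `w` from above at `x₀` within the set `D`. -/
def TouchesFromAboveWithin {n : ℕ} (D : Set (EuclideanSpace ℝ (Fin n)))
    (w φ : EuclideanSpace ℝ (Fin n) → ℝ) (x₀ : EuclideanSpace ℝ (Fin n)) : Prop :=
  w x₀ = φ x₀ ∧ ∀ᶠ x in nhdsWithin x₀ D, w x ≤ φ x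

namespace MPAux

abbrev EE (n : ℕ) := EuclideanSpace ℝ (Fin n)

section Alg
open Matrix Polynomial

lemma charpoly_conj_aux {n : ℕ} (U M : Matrix (Fin n) (Fin n) ℝ)
    (h1 : U * star U = 1) (h2 : star U * U = 1) :
    (U * M * star U).charpoly = M.charpoly := by
  have key : charmatrix (U * M * star U)
      = (C : ℝ →+* ℝ[X]).mapMatrix U * charmatrix M * (C : ℝ →+* ℝ[X]).mapMatrix (star U) := by
    simp only [charmatrix, mul_sub, sub_mul]
    congr 1
    · have hc : Matrix.scalar (Fin n) (X : ℝ[X]) * (C : ℝ →+* ℝ[X]).mapMatrix (star U)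
          = (C : ℝ →+* ℝ[X]).mapMatrix (star U) * Matrix.scalar (Fin n) (X : ℝ[X]) :=
        (Matrix.scalar_commute (X : ℝ[X]) (fun r => Commute.all _ _) _).eq
      rw [mul_assoc, hc, ← mul_assoc, ← _root_.map_mul, h1, _root_.map_one, one_mul]
    · rw [← _root_.map_mul, ← _root_.map_mul]
  rw [Matrix.charpoly, key, det_mul, det_mul, Matrix.charpoly]
  have : ((C : ℝ →+* ℝ[X]).mapMatrix U).det * ((C : ℝ →+* ℝ[X]).mapMatrix (star U)).det = 1 := by
    rw [← det_mul, ← _root_.map_mul, h1, _root_.map_one, det_one]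
  calc ((C : ℝ →+* ℝ[X]).mapMatrix U).det * (charmatrix M).det
        * ((C : ℝ →+* ℝ[X]).mapMatrix (star U)).det
      = (charmatrix M).det * (((C : ℝ →+* ℝ[X]).mapMatrix U).det
        * ((C : ℝ →+* ℝ[X]).mapMatrix (star U)).det) := by ring
    _ = (charmatrix M).det := by rw [this, mul_one]

lemma charpoly_eq_prod_eigs {n : ℕ} {M : Matrix (Fin n) (Fin n) ℝ} (hM : M.IsHermitian) :
    M.charpoly = ∏ i, (X - C (hM.eigenvalues i)) := by
  have hU1 : (hM.eigenvectorUnitary : Matrix (Fin n) (Fin n) ℝ)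
      * star (hM.eigenvectorUnitary : Matrix (Fin n) (Fin n) ℝ) = 1 :=
    Matrix.mem_unitaryGroup_iff.mp hM.eigenvectorUnitary.2
  have hU2 : star (hM.eigenvectorUnitary : Matrix (Fin n) (Fin n) ℝ)
      * (hM.eigenvectorUnitary : Matrix (Fin n) (Fin n) ℝ) = 1 :=
    Matrix.mem_unitaryGroup_iff'.mp hM.eigenvectorUnitary.2
  conv_lhs => rw [hM.spectral_theorem]
  rw [Unitary.conjStarAlgAut_apply]
  rw [charpoly_conj_aux _ _ hU1 hU2,
    Matrix.charpoly_of_upperTriangular _ (Matrix.blockTriangular_diagonal _)]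
  refine Finset.prod_congr rfl fun i _ => ?_
  simp [RCLike.ofReal_real_eq_id]

lemma eig_sum_eq {n : ℕ} {M : Matrix (Fin n) (Fin n) ℝ} (hM : M.IsHermitian)
    (d : Fin n → ℝ) (hd : M.charpoly = ∏ i, (X - C (d i))) (f : ℝ → ℝ) :
    ∑ i, f (hM.eigenvalues i) = ∑ i, f (d i) := by
  have h2 : (Finset.univ.val.map hM.eigenvalues) = Finset.univ.val.map d := by
    have e1 : ((Finset.univ.val.map hM.eigenvalues).map (fun a => X - C a)).prod
        = ((Finset.univ.val.map d).map (fun a => X - C a)).prod := by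
      rw [Multiset.map_map, Multiset.map_map]
      simp only [Function.comp_apply, Function.comp_def]
      rw [← Finset.prod_eq_multiset_prod, ← Finset.prod_eq_multiset_prod,
        ← charpoly_eq_prod_eigs hM, ← hd]
    have := congrArg Polynomial.roots e1
    rwa [Polynomial.roots_multiset_prod_X_sub_C, Polynomial.roots_multiset_prod_X_sub_C] at this
  rw [Finset.sum_eq_multiset_sum, Finset.sum_eq_multiset_sum,
    show (Finset.univ.val.map fun i => f (hM.eigenvalues i))
      = (Finset.univ.val.map hM.eigenvalues).map f by rw [Multiset.map_map]; rfl,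
    show (Finset.univ.val.map fun i => f (d i)) = (Finset.univ.val.map d).map f by
      rw [Multiset.map_map]; rfl, h2]

section rankone
variable {n : ℕ} (α γ : ℝ) (z : EuclideanSpace ℝ (Fin n))

lemma rankone_herm :
    (Matrix.of fun i j : Fin n => α * (if i = j then 1 else 0) + γ * (z i * z j)).IsHermitian := by
  rw [Matrix.IsHermitian]
  ext i j
  simp only [Matrix.conjTranspose_apply, Matrix.of_apply, star_trivial]
  rw [show (if j = i then (1:ℝ) else 0) = (if i = j then (1:ℝ) else 0) by simp [eq_comm]]
  ring

lemma rankone_charpoly (hn : 0 < n) (hz : z ≠ 0) :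
    (Matrix.of fun i j : Fin n => α * (if i = j then 1 else 0) + γ * (z i * z j)).charpoly
      = ∏ i, (X - C (if i = (⟨0, hn⟩ : Fin n) then α + γ * ‖z‖ ^ 2 else α)) := by
  set i₀ : Fin n := ⟨0, hn⟩
  set M : Matrix (Fin n) (Fin n) ℝ :=
    Matrix.of fun i j : Fin n => α * (if i = j then 1 else 0) + γ * (z i * z j) with hMdef
  set d : Fin n → ℝ := fun i => if i = i₀ then α + γ * ‖z‖ ^ 2 else α with hddef
  -- orthonormal basis with b i₀ = ‖z‖⁻¹ • z
  have hnz : ‖z‖ ≠ 0 := norm_ne_zero_iff.mpr hz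
  have horth : Orthonormal ℝ (({i₀} : Set (Fin n)).restrict
      (fun _ : Fin n => (‖z‖⁻¹ : ℝ) • z)) := by
    constructor
    · intro i
      show ‖(‖z‖⁻¹ : ℝ) • z‖ = 1
      simp [norm_smul, abs_of_nonneg (inv_nonneg.mpr (norm_nonneg z)), inv_mul_cancel₀ hnz]
    · intro i j hij
      exfalso
      exact hij (Subtype.ext (by
        have hi := i.2; have hj := j.2
        simp only [Set.mem_singleton_iff] at hi hj
        rw [hi, hj]))
  obtain ⟨b, hb⟩ := horth.exists_orthonormalBasis_extension_of_card_eq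
    (by simp) 
  have hb0 : b i₀ = (‖z‖⁻¹ : ℝ) • z := hb i₀ rfl
  set U : Matrix (Fin n) (Fin n) ℝ := Matrix.of fun i j => b j i with hUdef
  have h2 : star U * U = 1 := by
    ext i j
    simp only [Matrix.mul_apply, Matrix.star_apply, Matrix.of_apply, star_trivial, hUdef]
    have := orthonormal_iff_ite.mp b.orthonormal i j
    rw [PiLp.inner_apply] at this
    simp only [RCLike.inner_apply, starRingEnd_apply, star_trivial] at this
    rw [Matrix.one_apply]
    rw [← this]; exact Finset.sum_congr rfl (fun _ _ => mul_comm _ _)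
  have h1 : U * star U = 1 := mul_eq_one_comm.mp h2
  have hz' : z = ‖z‖ • b i₀ := by
    rw [hb0, smul_smul, mul_inv_cancel₀ hnz, one_smul]
  have hMU : M * U = U * Matrix.diagonal d := by
    ext i j
    rw [Matrix.mul_diagonal, Matrix.mul_apply]
    have expand : ∀ l, M i l * U l j
        = α * ((if i = l then (1:ℝ) else 0) * b j l) + γ * z i * (z l * b j l) := fun l => by
      simp only [hMdef, hUdef, Matrix.of_apply]; ring
    rw [Finset.sum_congr rfl (fun l _ => expand l), Finset.sum_add_distrib,
      ← Finset.mul_sum, ← Finset.mul_sum]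
    have e1 : (∑ l, (if i = l then (1:ℝ) else 0) * b j l) = b j i := by
      simp [ite_mul]
    have e2 : (∑ l, z l * b j l) = ⟪z, (b j : EuclideanSpace ℝ (Fin n))⟫ := by
      rw [PiLp.inner_apply]
      simp [RCLike.inner_apply]
      exact Finset.sum_congr rfl (fun _ _ => mul_comm _ _)
    rw [e1, e2]
    by_cases hj : j = i₀
    · subst hj
      rw [hb0, real_inner_smul_right, real_inner_self_eq_norm_sq]
      simp only [hUdef, hddef, Matrix.of_apply, hb0]
      rw [if_pos trivial]
      have : ((‖z‖⁻¹ : ℝ) • z) i = ‖z‖⁻¹ * z i := rfl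
      rw [this]
      field_simp
    · have hinner : ⟪z, (b j : EuclideanSpace ℝ (Fin n))⟫ = 0 := by
        rw [hz', real_inner_smul_left]
        have := orthonormal_iff_ite.mp b.orthonormal i₀ j
        rw [if_neg (fun h => hj h.symm)] at this
        rw [show ⟪(b i₀ : EuclideanSpace ℝ (Fin n)), b j⟫ = (0:ℝ) from this, mul_zero]
      rw [hinner]
      simp only [hUdef, hddef, Matrix.of_apply, if_neg hj]
      ring
  have hM_eq : M = U * Matrix.diagonal d * star U := by
    calc M = M * (U * star U) := by rw [h1, mul_one]
    _ = (M * U) * star U := by rw [mul_assoc]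
    _ = (U * Matrix.diagonal d) * star U := by rw [hMU]
  rw [hM_eq, charpoly_conj_aux _ _ h1 h2,
    Matrix.charpoly_of_upperTriangular _ (Matrix.blockTriangular_diagonal _)]
  refine Finset.prod_congr rfl fun i _ => ?_
  rw [Matrix.diagonal_apply_eq]

end rankone

lemma sum_d_eq {n : ℕ} (hn : 0 < n) (a α : ℝ) (f : ℝ → ℝ) :
    (∑ i : Fin n, f (if i = (⟨0, hn⟩ : Fin n) then a else α)) = f a + (n - 1 : ℕ) * f α := by
  rw [← Finset.add_sum_erase _ _ (Finset.mem_univ (⟨0, hn⟩ : Fin n)), if_pos rfl]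
  congr 1
  rw [Finset.sum_congr rfl (fun i hi => by rw [if_neg (Finset.ne_of_mem_erase hi)]),
    Finset.sum_const, Finset.card_erase_of_mem (Finset.mem_univ _), Finset.card_univ,
    Fintype.card_fin, nsmul_eq_mul]

lemma sum_d_max {n : ℕ} (hn : 0 < n) (a α : ℝ) :
    (∑ i : Fin n, max (if i = (⟨0, hn⟩ : Fin n) then a else α) 0)
      = max a 0 + (n - 1 : ℕ) * max α 0 := sum_d_eq hn a α (fun s => max s 0)

lemma sum_d_min {n : ℕ} (hn : 0 < n) (a α : ℝ) :
    (∑ i : Fin n, min (if i = (⟨0, hn⟩ : Fin n) then a else α) 0)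
      = min a 0 + (n - 1 : ℕ) * min α 0 := sum_d_eq hn a α (fun s => min s 0)

lemma rankone_pucci {n : ℕ} (hn : 0 < n) (α γ : ℝ) (z : EuclideanSpace ℝ (Fin n)) (hz : z ≠ 0)
    (lam' Lam : ℝ) (hα : 0 < α) (ha : α + γ * ‖z‖ ^ 2 < 0) :
    pucciSup lam' Lam (Matrix.of fun i j : Fin n => α * (if i = j then 1 else 0) + γ * (z i * z j))
      = Lam * ((n - 1 : ℕ) * α) + lam' * (α + γ * ‖z‖ ^ 2) := by
  have hM := rankone_herm α γ z
  rw [pucciSup, dif_pos hM]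
  rw [eig_sum_eq hM _ (rankone_charpoly α γ z hn hz) (fun s => max s 0),
    eig_sum_eq hM _ (rankone_charpoly α γ z hn hz) (fun s => min s 0)]
  rw [sum_d_max hn, sum_d_min hn, max_eq_right ha.le, max_eq_left hα.le,
    min_eq_left ha.le, min_eq_right hα.le]
  ring


end Alg

variable {n : ℕ}

section deriv
variable (y' : EE n) (m : ℕ) (t c : ℝ)

lemma hq_deriv (x : EE n) : HasFDerivAt (fun x : EE n => ‖x - y'‖ ^ 2)
    ((2:ℕ) • innerSL ℝ (x - y')) x := by
  simpa using ((hasFDerivAt_id x).sub_const y').norm_sq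

lemma hD1 (x : EE n) (hx : ‖x - y'‖ ^ 2 ≠ 0) :
    HasFDerivAt (fun x : EE n => t * (c - (‖x - y'‖ ^ 2) ^ (-(m:ℤ))))
      ((2 * t * m * (‖x - y'‖ ^ 2) ^ (-(m:ℤ) - 1)) • innerSL ℝ (x - y')) x := by
  have hh : HasDerivAt (fun s : ℝ => t * (c - s ^ (-(m:ℤ))))
      (t * -(((-(m:ℤ) : ℤ) : ℝ) * (‖x - y'‖ ^ 2) ^ (-(m:ℤ) - 1))) (‖x - y'‖ ^ 2) :=
    ((hasDerivAt_zpow (-(m:ℤ)) _ (Or.inl hx)).const_sub c).const_mul t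
  have h2 := hh.comp_hasFDerivAt x (hq_deriv y' x)
  refine h2.congr_fderiv ?_
  ext v
  simp [innerSL_apply_apply]
  push_cast
  ring
end deriv



noncomputable def innR (n : ℕ) : EE n →L[ℝ] EE n →L[ℝ] ℝ := innerSL ℝ

@[simp] lemma innR_apply (x v : EE n) : innR n x v = inner ℝ x v := rfl

section second
variable (y' : EE n) (m : ℕ) (t c : ℝ)

lemma hD2 (x₀ : EE n) (hx : ‖x₀ - y'‖ ^ 2 ≠ 0) :
    HasFDerivAt (fun x : EE n => (2 * t * m * (‖x - y'‖ ^ 2) ^ (-(m:ℤ) - 1)) • innerSL ℝ (x - y'))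
      ((2 * t * m * (‖x₀ - y'‖ ^ 2) ^ (-(m:ℤ) - 1)) • innR n
        + ((2 * t * m * (((-(m:ℤ) - 1 : ℤ) : ℝ) * (‖x₀ - y'‖ ^ 2) ^ (-(m:ℤ) - 1 - 1)))
            • ((2:ℕ) • innerSL ℝ (x₀ - y'))).smulRight (innerSL ℝ (x₀ - y'))) x₀ := by
  have hg : HasFDerivAt (fun x : EE n => 2 * t * m * (‖x - y'‖ ^ 2) ^ (-(m:ℤ) - 1))
      ((2 * t * m * (((-(m:ℤ) - 1 : ℤ) : ℝ) * (‖x₀ - y'‖ ^ 2) ^ (-(m:ℤ) - 1 - 1)))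
        • ((2:ℕ) • innerSL ℝ (x₀ - y'))) x₀ := by
    have hh : HasDerivAt (fun s : ℝ => 2 * t * m * s ^ (-(m:ℤ) - 1))
        (2 * t * m * (((-(m:ℤ) - 1 : ℤ) : ℝ) * (‖x₀ - y'‖ ^ 2) ^ (-(m:ℤ) - 1 - 1)))
        (‖x₀ - y'‖ ^ 2) :=
      (hasDerivAt_zpow (-(m:ℤ) - 1) _ (Or.inl hx)).const_mul (2 * t * m)
    have h3 := hh.comp_hasFDerivAt x₀ (hq_deriv y' x₀)
    exact h3
  have hA : HasFDerivAt (fun x : EE n => innerSL ℝ (x - y')) (innR n) x₀ := by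
    have h := ((innR n).hasFDerivAt (x := x₀ - y')).comp x₀
      ((hasFDerivAt_id x₀).sub_const y')
    have h' : HasFDerivAt (fun x : EE n => innerSL ℝ (x - y'))
        ((innR n).comp (ContinuousLinearMap.id ℝ (EE n))) x₀ := h
    rwa [ContinuousLinearMap.comp_id] at h'
  exact hg.smul hA
end second


section hess
variable (y' : EE n) (m : ℕ) (t c : ℝ)

lemma q_cont : Continuous (fun x : EE n => ‖x - y'‖ ^ 2) :=
  ((continuous_id.sub continuous_const).norm.pow 2)

lemma hessian_entries (x₀ : EE n) (hx : ‖x₀ - y'‖ ^ 2 ≠ 0) :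
    hessianMatrix (fun x => t * (c - (‖x - y'‖ ^ 2) ^ (-(m:ℤ)))) x₀
      = Matrix.of fun i j => (2 * t * m * (‖x₀ - y'‖ ^ 2) ^ (-(m:ℤ) - 1)) * (if i = j then 1 else 0)
        + (4 * t * m * (((-(m:ℤ) - 1 : ℤ) : ℝ) * (‖x₀ - y'‖ ^ 2) ^ (-(m:ℤ) - 1 - 1)))
          * ((x₀ - y') i * (x₀ - y') j) := by
  have hopen : IsOpen {x : EE n | ‖x - y'‖ ^ 2 ≠ 0} :=
    isOpen_compl_singleton.preimage (q_cont y')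
  have hev : (fun x => fderiv ℝ (fun x : EE n => t * (c - (‖x - y'‖ ^ 2) ^ (-(m:ℤ)))) x)
      =ᶠ[nhds x₀] (fun x => (2 * t * m * (‖x - y'‖ ^ 2) ^ (-(m:ℤ) - 1)) • innerSL ℝ (x - y')) :=
    Filter.eventually_of_mem (hopen.mem_nhds hx) (fun x hx' => (hD1 y' m t c x hx').fderiv)
  have hH := (hD2 y' m t x₀ hx).congr_of_eventuallyEq hev
  funext i j
  show iteratedFDeriv ℝ 2 _ x₀ _ = _
  rw [iteratedFDeriv_two_apply, hH.fderiv]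
  simp only [Matrix.cons_val_zero, Matrix.cons_val_one, Matrix.head_cons,
    ContinuousLinearMap.add_apply, ContinuousLinearMap.smul_apply,
    ContinuousLinearMap.smulRight_apply, innR_apply, innerSL_apply_apply, smul_eq_mul,
    Matrix.of_apply]
  rw [EuclideanSpace.inner_single_right, EuclideanSpace.inner_single_right,
    EuclideanSpace.inner_single_right]
  simp only [map_one, one_mul, starRingEnd_apply, star_trivial]
  simp only [EuclideanSpace.single_apply, nsmul_eq_mul, Nat.cast_ofNat]
  rw [show (if j = i then (1:ℝ) else 0) = if i = j then (1:ℝ) else 0 by simp [eq_comm]]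
  push_cast
  ring
end hess


section more
variable (y' : EE n) (m : ℕ) (t c : ℝ)

lemma phi_contDiffAt (x₀ : EE n) (hx : ‖x₀ - y'‖ ^ 2 ≠ 0) :
    ContDiffAt ℝ 2 (fun x : EE n => t * (c - (‖x - y'‖ ^ 2) ^ (-(m:ℤ)))) x₀ := by
  have hq : ContDiffAt ℝ 2 (fun x : EE n => ‖x - y'‖ ^ 2) x₀ :=
    ((contDiffAt_id.sub contDiffAt_const).norm_sq ℝ)
  have hzp : ContDiffAt ℝ 2 (fun s : ℝ => s ^ (-(m:ℤ))) (‖x₀ - y'‖ ^ 2) := by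
    have he : (fun s : ℝ => s ^ (-(m:ℤ))) = fun s : ℝ => (s ^ m)⁻¹ := by
      funext s; rw [zpow_neg, zpow_natCast]
    rw [he]
    exact ((contDiff_id.pow m).contDiffAt).inv (pow_ne_zero m hx)
  have h3 := hzp.comp x₀ hq
  exact contDiffAt_const.mul (contDiffAt_const.sub h3)

lemma grad_inner (x₀ ν : EE n) (hx : ‖x₀ - y'‖ ^ 2 ≠ 0) :
    ⟪gradient (fun x : EE n => t * (c - (‖x - y'‖ ^ 2) ^ (-(m:ℤ)))) x₀, ν⟫
      = (2 * t * m * (‖x₀ - y'‖ ^ 2) ^ (-(m:ℤ) - 1)) * ⟪x₀ - y', ν⟫ := by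
  have : gradient (fun x : EE n => t * (c - (‖x - y'‖ ^ 2) ^ (-(m:ℤ)))) x₀
      = (InnerProductSpace.toDual ℝ (EE n)).symm
        (fderiv ℝ (fun x : EE n => t * (c - (‖x - y'‖ ^ 2) ^ (-(m:ℤ)))) x₀) := rfl
  rw [this, InnerProductSpace.toDual_symm_apply, (hD1 y' m t c x₀ hx).fderiv]
  simp only [ContinuousLinearMap.smul_apply, innerSL_apply_apply, smul_eq_mul]

end more

end MPAux

open MPAux in
set_option maxHeartbeats 1000000 in
theorem maximum_principle_neumann_subsolution {n : ℕ}
    (lam Lam : ℝ) (hlam : 0 < lam) (hle : lam ≤ Lam)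
    (K : Set (EuclideanSpace ℝ (Fin n))) (hKopen : IsOpen K) (hKconv : Convex ℝ K)
    (h0 : (0 : EuclideanSpace ℝ (Fin n)) ∈ frontier K)
    (δ : ℝ) (hδ : 0 < δ)
    (y : EuclideanSpace ℝ (Fin n)) (hy : ‖y‖ = 1) (hball : Metric.ball y δ ⊆ K)
    (u : EuclideanSpace ℝ (Fin n) → ℝ)
    (hu : ContinuousOn u (closure (K ∩ Metric.ball 0 1)))
    -- interior viscosity subsolution: M⁺_{λ/n,Λ}(D²u) ≥ 0 in K ∩ B₁:
    (hint : ∀ x₀ ∈ K ∩ Metric.ball (0 : EuclideanSpace ℝ (Fin n)) 1,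
      ∀ φ : EuclideanSpace ℝ (Fin n) → ℝ, ContDiffAt ℝ 2 φ x₀ →
        pucciSup (lam / n) Lam (hessianMatrix φ x₀) < 0 →
        ¬ TouchesFromAboveWithin (closure (K ∩ Metric.ball 0 1)) u φ x₀)
    -- Neumann viscosity condition u_ν ≥ 0 on ∂K ∩ B₁:
    (hNeu : ∀ x₀ ∈ frontier K ∩ Metric.ball (0 : EuclideanSpace ℝ (Fin n)) 1,
      ∀ ψ : EuclideanSpace ℝ (Fin n) → ℝ, ContDiffAt ℝ 2 ψ x₀ →
        (∀ ν₀ : EuclideanSpace ℝ (Fin n), ‖ν₀‖ = 1 →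
          (∀ x ∈ K, 0 < ⟪ν₀, x - x₀⟫) → ⟪gradient ψ x₀, ν₀⟫ < 0) →
        ¬ TouchesFromAboveWithin (closure (K ∩ Metric.ball 0 1)) u ψ x₀)
    -- boundary data:
    (hbdry : ∀ x ∈ Metric.sphere (0 : EuclideanSpace ℝ (Fin n)) 1 ∩ closure K, u x ≤ 0) :
    ∀ x ∈ closure (K ∩ Metric.ball 0 1), u x ≤ 0 := by
  have hn : 0 < n := by
    rcases Nat.eq_zero_or_pos n with h | h
    · exfalso
      subst h
      have h0' : ‖y‖ = 0 := by simp [EuclideanSpace.norm_eq]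
      rw [hy] at h0'; norm_num at h0'
    · exact h
  have hLam : 0 < Lam := lt_of_lt_of_le hlam hle
  set C : Set (EuclideanSpace ℝ (Fin n)) := closure (K ∩ Metric.ball 0 1) with hC
  set y' : EuclideanSpace ℝ (Fin n) := (1 + δ/3) • y with hy'def
  have hy'K : y' ∈ K := by
    apply hball
    have hyy : y' - y = (δ/3) • y := by rw [hy'def]; module
    rw [Metric.mem_ball, dist_eq_norm, hyy, norm_smul, hy, Real.norm_eq_abs,
      abs_of_pos (by linarith), mul_one]
    linarith
  have hy'norm : ‖y'‖ = 1 + δ/3 := by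
    rw [hy'def, norm_smul, hy, Real.norm_eq_abs, abs_of_pos (by linarith), mul_one]
  have hCsub : ∀ x ∈ C, ‖x‖ ≤ 1 ∧ x ∈ closure K := by
    intro x hx
    constructor
    · have h1 : x ∈ closure (Metric.ball (0 : EuclideanSpace ℝ (Fin n)) 1) :=
        closure_mono Set.inter_subset_right hx
      have := Metric.closure_ball_subset_closedBall h1
      rwa [mem_closedBall_zero_iff] at this
    · exact closure_mono Set.inter_subset_left hx
  have hq_lb : ∀ x ∈ C, (δ/3)^2 ≤ ‖x - y'‖ ^ 2 := by
    intro x hx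
    have h1 : ‖x‖ ≤ 1 := (hCsub x hx).1
    have h2 : δ/3 ≤ ‖x - y'‖ := by
      have h3 : ‖y'‖ - ‖x‖ ≤ ‖y' - x‖ := norm_sub_norm_le _ _
      rw [norm_sub_rev] at h3
      rw [hy'norm] at h3
      linarith
    exact pow_le_pow_left₀ (by positivity : (0:ℝ) ≤ δ/3) h2 2
  have hq_ne : ∀ x ∈ C, ‖x - y'‖ ^ 2 ≠ 0 := fun x hx =>
    ne_of_gt (lt_of_lt_of_le (by positivity) (hq_lb x hx))
  have hq_pos : ∀ x ∈ C, 0 < ‖x - y'‖ ^ 2 := fun x hx =>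
    lt_of_lt_of_le (by positivity) (hq_lb x hx)
  -- choice of m
  set m : ℕ := n * n * (⌈Lam / lam⌉₊ + 1) with hmdef
  have hm1 : 1 ≤ m := by
    have h1 : 1 ≤ ⌈Lam / lam⌉₊ + 1 := le_add_self
    calc 1 = 1 * 1 * 1 := by norm_num
    _ ≤ n * n * (⌈Lam / lam⌉₊ + 1) := Nat.mul_le_mul (Nat.mul_le_mul hn hn) h1
  have hnR : (0:ℝ) < n := Nat.cast_pos.mpr hn
  have hkey : Lam * (↑(n - 1) : ℝ) < (lam / n) * (2 * m + 1) := by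
    have hcastm : (m:ℝ) = (n:ℝ) * n * ((⌈Lam / lam⌉₊ : ℝ) + 1) := by
      rw [hmdef]; push_cast; ring
    have hceil : Lam / lam ≤ (⌈Lam / lam⌉₊ : ℝ) := Nat.le_ceil _
    have h1 : (n:ℝ) * n * (Lam / lam) ≤ m := by rw [hcastm]; nlinarith
    have hsub : ((n - 1 : ℕ) : ℝ) ≤ (n:ℝ) := by
      have h5 : (n - 1 : ℕ) ≤ n := Nat.sub_le n 1
      exact_mod_cast h5
    rw [div_mul_eq_mul_div, lt_div_iff₀ hnR]
    have h2 : lam * (m:ℝ) ≥ (n:ℝ) * n * Lam := by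
      have h3 := mul_le_mul_of_nonneg_left h1 hlam.le
      calc (n:ℝ)*n*Lam = lam * ((n:ℝ)*n*(Lam/lam)) := by field_simp
      _ ≤ lam * m := h3
    have h4 : Lam * (↑(n-1):ℝ) * n ≤ Lam * n * n := by
      have := mul_le_mul_of_nonneg_left hsub hLam.le
      nlinarith
    have h6 : (0:ℝ) ≤ lam * m := by nlinarith
    linarith
  -- barrier constant
  set c₀ : ℝ := ((δ/3)^2) ^ (-(m:ℤ)) + 1 with hc₀def
  have hc₀pos : 0 < c₀ := by
    have : (0:ℝ) < ((δ/3)^2) ^ (-(m:ℤ)) := zpow_pos (by positivity) _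
    rw [hc₀def]
    linarith
  have hb_lb : ∀ x ∈ C, 1 ≤ c₀ - (‖x - y'‖ ^ 2) ^ (-(m:ℤ)) := by
    intro x hx
    have h1 : (‖x - y'‖ ^ 2) ^ (-(m:ℤ)) ≤ ((δ/3)^2) ^ (-(m:ℤ)) := by
      rw [zpow_neg, zpow_neg, zpow_natCast, zpow_natCast]
      exact inv_anti₀ (by positivity)
        (pow_le_pow_left₀ (by positivity) (hq_lb x hx) m)
    rw [hc₀def]
    linarith
  have hb_ub : ∀ x : EuclideanSpace ℝ (Fin n), (0:ℝ) ≤ (‖x - y'‖ ^ 2) ^ (-(m:ℤ)) :=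
    fun x => zpow_nonneg (by positivity) _
  -- main claim
  have claim : ∀ t : ℝ, 0 < t → ∀ x ∈ C, u x ≤ t * (c₀ - (‖x - y'‖ ^ 2) ^ (-(m:ℤ))) := by
    intro t ht
    have hCcomp : IsCompact C := by
      have hbd : Bornology.IsBounded (K ∩ Metric.ball (0:EuclideanSpace ℝ (Fin n)) 1) :=
        Metric.isBounded_ball.subset Set.inter_subset_right
      exact hbd.isCompact_closure
    have hCne : C.Nonempty := by
      have h1 : (0:EuclideanSpace ℝ (Fin n)) ∈ closure K := h0.1
      rw [Metric.mem_closure_iff] at h1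
      obtain ⟨z, hzK, hz1⟩ := h1 1 one_pos
      exact ⟨z, subset_closure ⟨hzK, by rwa [Metric.mem_ball, dist_comm]⟩⟩
    have hgcont : ContinuousOn
        (fun x => u x - t * (c₀ - (‖x - y'‖ ^ 2) ^ (-(m:ℤ)))) C :=
      hu.sub (fun x hx =>
        ((phi_contDiffAt y' m t c₀ x (hq_ne x hx)).continuousAt).continuousWithinAt)
    obtain ⟨x₀, hx₀C, hx₀max⟩ := hCcomp.exists_isMaxOn hCne hgcont
    have hmax' : ∀ x ∈ C, u x - t * (c₀ - (‖x - y'‖ ^ 2) ^ (-(m:ℤ)))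
        ≤ u x₀ - t * (c₀ - (‖x₀ - y'‖ ^ 2) ^ (-(m:ℤ))) := fun x hx => hx₀max hx
    by_cases hcase : u x₀ - t * (c₀ - (‖x₀ - y'‖ ^ 2) ^ (-(m:ℤ))) ≤ 0
    · intro x hx
      linarith [hmax' x hx]
    · exfalso
      push_neg at hcase
      have hq0 : ‖x₀ - y'‖ ^ 2 ≠ 0 := hq_ne x₀ hx₀C
      have hq0pos : 0 < ‖x₀ - y'‖ ^ 2 := hq_pos x₀ hx₀C
      set M₀ : ℝ := u x₀ - t * (c₀ - (‖x₀ - y'‖ ^ 2) ^ (-(m:ℤ))) with hM₀def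
      set c₁ : ℝ := c₀ + M₀ / t with hc₁def
      have hφψ : ∀ x1 : EuclideanSpace ℝ (Fin n),
          t * (c₁ - (‖x1 - y'‖ ^ 2) ^ (-(m:ℤ)))
            = t * (c₀ - (‖x1 - y'‖ ^ 2) ^ (-(m:ℤ))) + M₀ := by
        intro x1
        rw [hc₁def]
        have htm : t * (M₀ / t) = M₀ := by
          rw [mul_div_assoc']
          exact mul_div_cancel_left₀ M₀ (ne_of_gt ht)
        calc t * (c₀ + M₀ / t - (‖x1 - y'‖ ^ 2) ^ (-(m:ℤ)))
            = t * (c₀ - (‖x1 - y'‖ ^ 2) ^ (-(m:ℤ))) + t * (M₀ / t) := by ring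
        _ = t * (c₀ - (‖x1 - y'‖ ^ 2) ^ (-(m:ℤ))) + M₀ := by rw [htm]
      have htouch : TouchesFromAboveWithin C u
          (fun x1 => t * (c₁ - (‖x1 - y'‖ ^ 2) ^ (-(m:ℤ)))) x₀ := by
        constructor
        · show u x₀ = t * (c₁ - (‖x₀ - y'‖ ^ 2) ^ (-(m:ℤ)))
          rw [hφψ x₀, hM₀def]; ring
        · refine Filter.eventually_of_mem self_mem_nhdsWithin (fun x hx => ?_)
          show u x ≤ t * (c₁ - (‖x - y'‖ ^ 2) ^ (-(m:ℤ)))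
          have h2 := hmax' x hx
          rw [hφψ x, hM₀def]
          linarith
      have hψx₀ : t ≤ t * (c₀ - (‖x₀ - y'‖ ^ 2) ^ (-(m:ℤ))) := by
        nlinarith [hb_lb x₀ hx₀C]
      have hx₀lt : ‖x₀‖ < 1 := by
        rcases lt_or_eq_of_le (hCsub x₀ hx₀C).1 with h | h
        · exact h
        · exfalso
          have hsphere : x₀ ∈ Metric.sphere (0:EuclideanSpace ℝ (Fin n)) 1 ∩ closure K :=
            ⟨by rw [Metric.mem_sphere, dist_zero_right, h], (hCsub x₀ hx₀C).2⟩
          have hb := hbdry x₀ hsphere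
          have hux₀ : u x₀ = t * (c₀ - (‖x₀ - y'‖ ^ 2) ^ (-(m:ℤ))) + M₀ := by
            rw [hM₀def]; ring
          linarith
      have hx₀ball : x₀ ∈ Metric.ball (0:EuclideanSpace ℝ (Fin n)) 1 := by
        rwa [Metric.mem_ball, dist_zero_right]
      -- hessian data
      have hmcast : (0:ℝ) < (m:ℝ) := by exact_mod_cast hm1
      have hPpos : (0:ℝ) < (‖x₀ - y'‖ ^ 2) ^ (-(m:ℤ) - 1) := zpow_pos hq0pos _
      set α : ℝ := 2 * t * m * (‖x₀ - y'‖ ^ 2) ^ (-(m:ℤ) - 1) with hαdef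
      set γ : ℝ := 4 * t * m * (((-(m:ℤ) - 1 : ℤ) : ℝ) * (‖x₀ - y'‖ ^ 2) ^ (-(m:ℤ) - 1 - 1))
        with hγdef
      have hα : 0 < α := by
        rw [hαdef]
        nlinarith [mul_pos (mul_pos ht hmcast) hPpos]
      have hzq : (‖x₀ - y'‖ ^ 2) ^ (-(m:ℤ) - 1 - 1) * (‖x₀ - y'‖ ^ 2)
          = (‖x₀ - y'‖ ^ 2) ^ (-(m:ℤ) - 1) := by
        rw [zpow_sub_one₀ hq0, mul_assoc, inv_mul_cancel₀ hq0, mul_one]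
      have heq : α + γ * ‖(x₀ - y' : EuclideanSpace ℝ (Fin n))‖ ^ 2 = -(2 * m + 1) * α := by
        rw [hαdef, hγdef]
        push_cast
        linear_combination (4 * t * (m:ℝ) * (-(m:ℝ) - 1)) * hzq
      have ha : α + γ * ‖(x₀ - y' : EuclideanSpace ℝ (Fin n))‖ ^ 2 < 0 := by
        rw [heq]
        nlinarith [hα]
      have hzne : (x₀ - y' : EuclideanSpace ℝ (Fin n)) ≠ 0 := by
        intro h
        apply hq0
        rw [show ‖x₀ - y'‖ = ‖(x₀ - y' : EuclideanSpace ℝ (Fin n))‖ from rfl, h]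
        simp
      have hpucci : pucciSup (lam / n) Lam
          (hessianMatrix (fun x1 => t * (c₁ - (‖x1 - y'‖ ^ 2) ^ (-(m:ℤ)))) x₀) < 0 := by
        rw [hessian_entries y' m t c₁ x₀ hq0, ← hαdef, ← hγdef,
          rankone_pucci hn α γ (x₀ - y') hzne (lam / n) Lam hα ha, heq]
        nlinarith [hkey, hα]
      have hcontD : ContDiffAt ℝ 2 (fun x1 => t * (c₁ - (‖x1 - y'‖ ^ 2) ^ (-(m:ℤ)))) x₀ :=
        phi_contDiffAt y' m t c₁ x₀ hq0
      by_cases hK : x₀ ∈ K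
      · exact hint x₀ ⟨hK, hx₀ball⟩ _ hcontD hpucci htouch
      · have hfr : x₀ ∈ frontier K := by
          rw [frontier, hKopen.interior_eq]
          exact ⟨(hCsub x₀ hx₀C).2, hK⟩
        refine hNeu x₀ ⟨hfr, hx₀ball⟩ _ hcontD ?_ htouch
        intro ν hν hsupp
        have h1 : 0 < ⟪ν, y' - x₀⟫ := hsupp y' hy'K
        rw [grad_inner y' m t c₁ x₀ ν hq0]
        have h2 : ⟪(x₀ - y' : EuclideanSpace ℝ (Fin n)), ν⟫ = -⟪ν, y' - x₀⟫ := by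
          rw [real_inner_comm, ← inner_neg_right, neg_sub]
        rw [h2, ← hαdef]
        nlinarith [hα]
  -- conclude
  intro x hx
  by_contra hpos
  push_neg at hpos
  have ht : 0 < u x / (2 * c₀) := by positivity
  have hcl := claim (u x / (2 * c₀)) ht x hx
  have hQ := hb_ub x
  have h1 : u x / (2 * c₀) * (c₀ - (‖x - y'‖ ^ 2) ^ (-(m:ℤ))) ≤ u x / (2 * c₀) * c₀ := by
    apply mul_le_mul_of_nonneg_left _ ht.le
    linarith
  have h2 : u x / (2 * c₀) * c₀ = u x / 2 := by
    field_simp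
  linarith
end

section
/- Let K ⊂ ℝⁿ be open convex, x₀ ∈ ∂K, and suppose u : closure(K) → ℝ is touched from below at x₀ by the paraboloid p(x) = c − (1/(2ε))|x − y₀|² for some y₀ ∈ closure(K). If ψ is C² near x₀ and touches u from above at x₀ (so ψ ≥ u ≥ p near x₀ and ψ(x₀) = u(x₀) = p(x₀)), then −∇ψ(x₀) cannot lie in the interior of the tangent cone K_{x₀}. Equivalently, ψ does not violate the viscosity Neumann condition u_ν ≥ 0 at x₀. -/
open scoped RealInnerProductSpace

noncomputable def tangentConeOf {n : ℕ} (K : Set (EuclideanSpace ℝ (Fin n)))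
    (x₀ : EuclideanSpace ℝ (Fin n)) : Set (EuclideanSpace ℝ (Fin n)) :=
  closure {v | ∃ t : ℝ, 0 < t ∧ ∃ y ∈ K, v = t • (y - x₀)}

theorem paraboloid_from_below_blocks_neumann_violation {n : ℕ}
    (K : Set (EuclideanSpace ℝ (Fin n))) (hKopen : IsOpen K) (hKconv : Convex ℝ K)
    (x₀ : EuclideanSpace ℝ (Fin n)) (hx₀ : x₀ ∈ frontier K)
    (u : EuclideanSpace ℝ (Fin n) → ℝ)
    (ε : ℝ) (hε : 0 < ε) (c : ℝ)
    (y₀ : EuclideanSpace ℝ (Fin n)) (hy₀ : y₀ ∈ closure K)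
    (ψ : EuclideanSpace ℝ (Fin n) → ℝ) (hψ : ContDiffAt ℝ 2 ψ x₀)
    -- the paraboloid p touches u from below at x₀ and ψ touches u from above at x₀:
    (hp₀ : c - ‖x₀ - y₀‖ ^ 2 / (2 * ε) = u x₀)
    (hψ₀ : u x₀ = ψ x₀)
    (hsandwich : ∀ᶠ x in nhdsWithin x₀ (closure K),
      c - ‖x - y₀‖ ^ 2 / (2 * ε) ≤ u x ∧ u x ≤ ψ x) :
    -gradient ψ x₀ ∉ interior (tangentConeOf K x₀) := by
  intro h
  rcases K.eq_empty_or_nonempty with hKe | ⟨y₁, hy₁⟩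
  · have hempty : {v : EuclideanSpace ℝ (Fin n) |
        ∃ t : ℝ, 0 < t ∧ ∃ y ∈ K, v = t • (y - x₀)} = ∅ := by
      ext v; simp [hKe]
    rw [tangentConeOf, hempty] at h
    simp at h
  set S : Set (EuclideanSpace ℝ (Fin n)) :=
    {v | ∃ t : ℝ, 0 < t ∧ ∃ y ∈ K, v = t • (y - x₀)} with hS
  have hCdef : tangentConeOf K x₀ = closure S := rfl
  have hx₀cl : x₀ ∈ closure K := frontier_subset_closure hx₀
  have hx₀K : x₀ ∉ K := fun hmem => hx₀.2 (by rwa [hKopen.interior_eq])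
  -- the gradient of φ = ψ - p at x₀
  set g : EuclideanSpace ℝ (Fin n) := gradient ψ x₀ + ε⁻¹ • (x₀ - y₀) with hg
  -- the function φ has derivative ⟪g, ·⟫ at x₀
  have hψd : DifferentiableAt ℝ ψ x₀ := hψ.differentiableAt (by norm_num)
  have hψF : HasFDerivAt ψ
      ((InnerProductSpace.toDual ℝ (EuclideanSpace ℝ (Fin n))) (gradient ψ x₀)) x₀ := by
    have := hψd.hasGradientAt
    rwa [HasGradientAt, HasGradientAtFilter] at this
  have hq : HasFDerivAt (fun x : EuclideanSpace ℝ (Fin n) => ‖x - y₀‖ ^ 2)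
      (2 • (innerSL ℝ (x₀ - y₀)).comp (ContinuousLinearMap.id ℝ _)) x₀ :=
    ((hasFDerivAt_id x₀).sub_const y₀).norm_sq
  have hφ : HasFDerivAt (fun x : EuclideanSpace ℝ (Fin n) =>
      ψ x - (c - ‖x - y₀‖ ^ 2 / (2 * ε)))
      ((InnerProductSpace.toDual ℝ (EuclideanSpace ℝ (Fin n))) g) x₀ := by
    have hbase := hψF.sub ((hasFDerivAt_const c x₀).sub (hq.const_mul ((2 * ε)⁻¹)))
    have heq : (fun x : EuclideanSpace ℝ (Fin n) => ψ x - (c - ‖x - y₀‖ ^ 2 / (2 * ε)))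
        =ᶠ[nhds x₀] fun x => ψ x - (c - (2 * ε)⁻¹ * ‖x - y₀‖ ^ 2) := by
      refine Filter.Eventually.of_forall fun x => ?_
      field_simp
    refine (hbase.congr_of_eventuallyEq heq).congr_fderiv ?_
    ext v
    simp only [ContinuousLinearMap.coe_sub', Pi.sub_apply,
      ContinuousLinearMap.coe_smul', Pi.smul_apply, ContinuousLinearMap.coe_comp',
      Function.comp_apply, ContinuousLinearMap.coe_id', id_eq, innerSL_apply_apply,
      InnerProductSpace.toDual_apply_apply, hg, inner_add_left, real_inner_smul_left,
      smul_eq_mul, ContinuousLinearMap.smul_apply, ContinuousLinearMap.zero_apply,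
      ContinuousLinearMap.sub_apply, nsmul_eq_mul, Nat.cast_ofNat]
    have : ⟪x₀ - y₀, v⟫ = ⟪v, x₀ - y₀⟫ := real_inner_comm _ _
    field_simp
    nlinarith [this]
  -- local minimum of φ on closure K at x₀
  have hmin : IsLocalMinOn (fun x : EuclideanSpace ℝ (Fin n) =>
      ψ x - (c - ‖x - y₀‖ ^ 2 / (2 * ε))) (closure K) x₀ := by
    refine hsandwich.mono fun x hx => ?_
    show ψ x₀ - (c - ‖x₀ - y₀‖ ^ 2 / (2 * ε)) ≤ ψ x - (c - ‖x - y₀‖ ^ 2 / (2 * ε))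
    have h1 := hx.1
    have h2 := hx.2
    rw [hp₀, hψ₀]
    linarith
  -- the first order condition on the positive tangent cone
  have key : ∀ v ∈ posTangentConeAt (closure K) x₀, 0 ≤ ⟪g, v⟫ := by
    intro v hv
    simpa using hmin.hasFDerivWithinAt_nonneg hφ.hasFDerivWithinAt hv
  have coneS : ∀ v ∈ S, 0 ≤ ⟪g, v⟫ := by
    rintro v ⟨t, ht, y, hy, rfl⟩
    refine key _ (mem_posTangentConeAt_of_frequently_mem (Filter.Eventually.frequently ?_))
    have h1t : (0 : ℝ) < 1 / t := by positivity
    filter_upwards [Ioo_mem_nhdsGT_of_mem (Set.mem_Ico.2 ⟨le_rfl, h1t⟩)] with s hs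
    have hst0 : 0 < s * t := mul_pos hs.1 ht
    have hst1 : s * t ≤ 1 := by
      rw [← le_div_iff₀ ht]; exact hs.2.le
    have heq : x₀ + s • t • (y - x₀) = (1 - s * t) • x₀ + (s * t) • y := by
      module
    rw [heq]
    exact hKconv.closure hx₀cl (subset_closure hy) (by linarith) hst0.le (by ring)
  have coneC : ∀ v ∈ closure S, 0 ≤ ⟪g, v⟫ := by
    intro v hv
    have hcl : IsClosed {v : EuclideanSpace ℝ (Fin n) | 0 ≤ ⟪g, v⟫} :=
      isClosed_le continuous_const (continuous_const.inner continuous_id)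
    exact hcl.closure_subset_iff.2 coneS hv
  -- S is convex
  have hSconv : Convex ℝ S := by
    rintro v₁ ⟨t₁, ht₁, z₁, hz₁, rfl⟩ v₂ ⟨t₂, ht₂, z₂, hz₂, rfl⟩ a b ha hb hab
    rcases eq_or_lt_of_le ha with rfl | ha'
    · refine ⟨t₂, ht₂, z₂, hz₂, ?_⟩
      rw [show b = (1 : ℝ) by linarith]
      simp
    rcases eq_or_lt_of_le hb with rfl | hb'
    · refine ⟨t₁, ht₁, z₁, hz₁, ?_⟩
      rw [show a = (1 : ℝ) by linarith]
      simp
    have ht : 0 < a * t₁ + b * t₂ := by positivity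
    refine ⟨a * t₁ + b * t₂, ht,
      (a * t₁ / (a * t₁ + b * t₂)) • z₁ + (b * t₂ / (a * t₁ + b * t₂)) • z₂,
      hKconv hz₁ hz₂ (by positivity) (by positivity) (by field_simp), ?_⟩
    have hne : a * t₁ + b * t₂ ≠ 0 := ht.ne'
    match_scalars <;> field_simp <;> ring
  have hCconv : Convex ℝ (closure S) := hSconv.closure
  -- closure S is stable under positive scaling
  have hsmulS : ∀ t : ℝ, 0 < t → ∀ v ∈ S, t • v ∈ S := by
    rintro t ht v ⟨s, hs, y, hy, rfl⟩
    exact ⟨t * s, mul_pos ht hs, y, hy, smul_smul t s _⟩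
  have hsmulC : ∀ t : ℝ, 0 < t → ∀ v ∈ closure S, t • v ∈ closure S := by
    intro t ht v hv
    have hsub : (t • ·) '' closure S ⊆ closure S := by
      refine (image_closure_subset_closure_image (continuous_const_smul t)).trans ?_
      exact closure_mono fun w ⟨z, hz, hw⟩ => hw ▸ hsmulS t ht z hz
    exact hsub ⟨v, hv, rfl⟩
  -- interior + member ⊆ interior for the convex cone closure S
  have hadd : ∀ a ∈ interior (closure S), ∀ b ∈ closure S,
      a + b ∈ interior (closure S) := by
    intro a ha b hb
    have hm : (1 / 2 : ℝ) • a + (1 / 2 : ℝ) • b ∈ interior (closure S) :=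
      hCconv.combo_interior_self_mem_interior ha hb (by norm_num) (by norm_num) (by norm_num)
    have h2 : a + b = (2 : ℝ) • ((1 / 2 : ℝ) • a + (1 / 2 : ℝ) • b) := by
      rw [smul_add, smul_smul, smul_smul]; norm_num
    rw [h2]
    have hopen : IsOpen ((fun z => (2 : ℝ) • z) '' interior (closure S)) :=
      isOpenMap_smul₀ two_ne_zero _ isOpen_interior
    have hsub2 : ((fun z => (2 : ℝ) • z) '' interior (closure S)) ⊆ closure S := by
      rintro w ⟨z, hz, rfl⟩
      exact hsmulC 2 two_pos z (interior_subset hz)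
    exact interior_maximal hsub2 hopen ⟨_, hm, rfl⟩
  -- ε⁻¹ • (y₀ - x₀) belongs to closure S
  have hb₀ : ε⁻¹ • (y₀ - x₀) ∈ closure S := by
    have hmap : Continuous fun y : EuclideanSpace ℝ (Fin n) => ε⁻¹ • (y - x₀) :=
      (continuous_id.sub continuous_const).const_smul ε⁻¹
    have himg : (fun y : EuclideanSpace ℝ (Fin n) => ε⁻¹ • (y - x₀)) '' K ⊆ S := by
      rintro w ⟨y, hy, rfl⟩
      exact ⟨ε⁻¹, by positivity, y, hy, rfl⟩
    have hx : ε⁻¹ • (y₀ - x₀) ∈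
        (fun y : EuclideanSpace ℝ (Fin n) => ε⁻¹ • (y - x₀)) '' closure K := ⟨y₀, hy₀, rfl⟩
    exact (closure_minimal (himg.trans subset_closure) isClosed_closure)
      ((image_closure_subset_closure_image hmap) hx)
  rw [hCdef] at h
  -- conclude g = 0
  have hng : -g ∈ interior (closure S) := by
    have hgeq : -g = -gradient ψ x₀ + ε⁻¹ • (y₀ - x₀) := by
      rw [hg]; module
    rw [hgeq]
    exact hadd _ h _ hb₀
  have hg0 : g = 0 := by
    have h1 : 0 ≤ ⟪g, -g⟫ := coneC _ (interior_subset hng)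
    rw [inner_neg_right] at h1
    have : ⟪g, g⟫ = 0 := le_antisymm (by linarith) real_inner_self_nonneg
    exact inner_self_eq_zero.1 this
  have h0 : (0 : EuclideanSpace ℝ (Fin n)) ∈ interior (closure S) := by
    rw [hg0, neg_zero] at hng
    exact hng
  -- separation: contradiction
  obtain ⟨f, hf⟩ := geometric_hahn_banach_open_point hKconv hKopen hx₀K
  have hfS : ∀ v ∈ closure S, f v ≤ 0 := by
    have hcl : IsClosed {v : EuclideanSpace ℝ (Fin n) | f v ≤ 0} :=
      isClosed_le f.continuous continuous_const
    refine fun v hv => hcl.closure_subset_iff.2 ?_ hv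
    rintro w ⟨t, ht, y, hy, rfl⟩
    have h1 := hf y hy
    have h2 : f (y - x₀) < 0 := by rw [map_sub]; linarith
    have h3 : f (t • (y - x₀)) = t * f (y - x₀) := by rw [map_smul]; rfl
    rw [Set.mem_setOf_eq, h3]
    nlinarith
  have hw : 0 < f (x₀ - y₁) := by
    have := hf y₁ hy₁
    rw [map_sub]; linarith
  have hwne : x₀ - y₁ ≠ 0 := fun h0 => by rw [h0, map_zero] at hw; exact lt_irrefl 0 hw
  obtain ⟨r, hr, hball⟩ := Metric.mem_nhds_iff.1 (mem_interior_iff_mem_nhds.1 h0)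
  have hnormw : 0 < ‖x₀ - y₁‖ := norm_pos_iff.2 hwne
  set v := (r / (2 * ‖x₀ - y₁‖)) • (x₀ - y₁) with hv
  have hvball : v ∈ Metric.ball (0 : EuclideanSpace ℝ (Fin n)) r := by
    rw [Metric.mem_ball, dist_zero_right, hv, norm_smul, Real.norm_eq_abs,
      abs_of_pos (by positivity)]
    rw [div_mul_eq_mul_div, mul_comm]
    calc ‖x₀ - y₁‖ * r / (2 * ‖x₀ - y₁‖) = r / 2 := by
          field_simp
      _ < r := by linarith
  have hfv : 0 < f v := by
    rw [hv, map_smul, smul_eq_mul]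
    positivity
  have : f v ≤ 0 := hfS v (hball hvball)
  linarith
end

section
/- Let K be an open convex set, x₀ ∈ ∂K ∩ B₁, and suppose u ∈ C(closure(K) ∩ B₁) satisfies the viscosity Neumann condition u_ν ≥ 0 at boundary points, tested with functions ψ touching from above that additionally satisfy M⁺_{λ/n,Λ}(D²ψ(x₀)) < 0. Then the restriction to this smaller test class is without loss of generality: if u satisfies the condition for all ψ that touch u strictly from above at x₀ with −∇ψ(x₀) interior to K_{x₀} and M⁺_{λ/n,Λ}(D²ψ(x₀)) < 0, then it satisfies it for all C² test functions ψ touching from above with −∇ψ(x₀) interior to K_{x₀}. The reduction is achieved by replacing ψ with ψ_{ε,M}(x) = ψ(x) + ε((x−x₀)·ν₀ + |x−x₀|²) − M((x−x₀)·ν₀)², choosing M large and then ε small. -/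
open scoped RealInnerProductSpace

open scoped InnerProductSpace

section Aux

lemma taylor_upper {n : ℕ} (ψ : EuclideanSpace ℝ (Fin n) → ℝ) (x₀ : EuclideanSpace ℝ (Fin n))
    (hψ : ContDiffAt ℝ 2 ψ x₀) :
    ∃ C > 0, ∀ᶠ x in nhds x₀,
      ψ x ≤ ψ x₀ + fderiv ℝ ψ x₀ (x - x₀) + C * ‖x - x₀‖ ^ 2 := by
  have hD : ContDiffAt ℝ 1 (fderiv ℝ ψ) x₀ := by
    have := hψ.fderiv_right (m := 1) (by norm_num)
    exact this
  have hDdiff : DifferentiableAt ℝ (fderiv ℝ ψ) x₀ := hD.differentiableAt one_ne_zero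
  have hbigO := hDdiff.hasFDerivAt.isBigO_sub
  obtain ⟨C₀, hC₀pos, hC₀⟩ := hbigO.exists_pos
  rw [Asymptotics.isBigOWith_iff] at hC₀
  have hev : ∀ᶠ y in nhds x₀, ContDiffAt ℝ 2 ψ y := hψ.eventually (by norm_num)
  have hall : ∀ᶠ y in nhds x₀,
      DifferentiableAt ℝ ψ y ∧ ‖fderiv ℝ ψ y - fderiv ℝ ψ x₀‖ ≤ C₀ * ‖y - x₀‖ := by
    filter_upwards [hev, hC₀] with y h1 h2
    exact ⟨h1.differentiableAt (by norm_num), by simpa using h2⟩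
  obtain ⟨r, hr, hball⟩ := Metric.eventually_nhds_iff_ball.1 hall
  refine ⟨C₀, hC₀pos, Metric.eventually_nhds_iff_ball.2 ⟨r, hr, fun x hx => ?_⟩⟩
  rcases eq_or_ne x x₀ with rfl | hne
  · simp
  set f : EuclideanSpace ℝ (Fin n) → ℝ := fun y => ψ y - fderiv ℝ ψ x₀ (y - x₀)
  have key : ‖f x - f x₀‖ ≤ (C₀ * ‖x - x₀‖) * ‖x - x₀‖ := by
    have hconv : Convex ℝ (Metric.closedBall x₀ ‖x - x₀‖) := convex_closedBall _ _
    have hsub : Metric.closedBall x₀ ‖x - x₀‖ ⊆ Metric.ball x₀ r := by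
      intro y hy
      simp only [Metric.mem_closedBall] at hy
      have : ‖x - x₀‖ < r := by simpa [dist_eq_norm] using hx
      exact Metric.mem_ball.2 (lt_of_le_of_lt hy this)
    refine hconv.norm_image_sub_le_of_norm_hasFDerivWithin_le
      (f' := fun y => fderiv ℝ ψ y - fderiv ℝ ψ x₀) (fun y hy => ?_) (fun y hy => ?_)
      (Metric.mem_closedBall_self (norm_nonneg _)) (by simp [dist_eq_norm])
    · have hdy : DifferentiableAt ℝ ψ y := (hball y (hsub hy)).1
      have h1 : HasFDerivAt f (fderiv ℝ ψ y - fderiv ℝ ψ x₀) y := by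
        have haff : HasFDerivAt (fun y => (fderiv ℝ ψ x₀) (y - x₀)) (fderiv ℝ ψ x₀) y := by
          simpa [map_sub] using
            ((fderiv ℝ ψ x₀).hasFDerivAt (x := y)).sub_const ((fderiv ℝ ψ x₀) x₀)
        exact hdy.hasFDerivAt.sub haff
      exact h1.hasFDerivWithinAt
    · calc ‖fderiv ℝ ψ y - fderiv ℝ ψ x₀‖ ≤ C₀ * ‖y - x₀‖ := (hball y (hsub hy)).2
        _ ≤ C₀ * ‖x - x₀‖ := by
            have : ‖y - x₀‖ ≤ ‖x - x₀‖ := by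
              simpa [dist_eq_norm] using Metric.mem_closedBall.1 hy
            exact mul_le_mul_of_nonneg_left this hC₀pos.le
  have : f x - f x₀ ≤ C₀ * ‖x - x₀‖ ^ 2 := by
    have := (le_abs_self (f x - f x₀)).trans (by simpa [Real.norm_eq_abs] using key)
    nlinarith [this]
  simp only [f, sub_self, map_zero, sub_zero, map_sub] at this
  rw [map_sub]
  linarith [this]

lemma exists_inner_normal {n : ℕ} (K : Set (EuclideanSpace ℝ (Fin n)))
    (hKopen : IsOpen K) (hKconv : Convex ℝ K) (hKne : K.Nonempty)
    (x₀ : EuclideanSpace ℝ (Fin n)) (hx₀ : x₀ ∈ frontier K) :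
    ∃ ν : EuclideanSpace ℝ (Fin n), ‖ν‖ = 1 ∧ ∀ y ∈ closure K, 0 ≤ ⟪ν, y - x₀⟫ := by
  have hx₀K : x₀ ∉ K := by
    have := hx₀
    rw [frontier, hKopen.interior_eq] at this
    exact this.2
  obtain ⟨f, hf⟩ := geometric_hahn_banach_open_point hKconv hKopen hx₀K
  obtain ⟨w, hw⟩ : ∃ w : EuclideanSpace ℝ (Fin n),
      ∀ z, f z = ⟪w, z⟫ := by
    refine ⟨(InnerProductSpace.toDual ℝ _).symm f, fun z => ?_⟩
    simp [InnerProductSpace.toDual_apply_apply]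
  have hwne : w ≠ 0 := by
    obtain ⟨y, hy⟩ := hKne
    intro h
    have := hf y hy
    rw [hw, hw, h] at this
    simp at this
  refine ⟨-(‖w‖⁻¹ • w), ?_, ?_⟩
  · rw [norm_neg, norm_smul]
    simp [norm_inv, inv_mul_cancel₀ (norm_ne_zero_iff.2 hwne)]
  · have hK : ∀ y ∈ K, 0 ≤ ⟪-(‖w‖⁻¹ • w), y - x₀⟫ := by
      intro y hy
      have h1 : f y < f x₀ := hf y hy
      rw [hw, hw] at h1
      have h2 : ⟪w, y - x₀⟫ < 0 := by rw [inner_sub_right]; linarith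
      rw [inner_neg_left, real_inner_smul_left]
      have : (0:ℝ) < ‖w‖⁻¹ := by
        rw [inv_pos]
        exact norm_pos_iff.2 hwne
      nlinarith
    intro y hy
    have hclosed : IsClosed {z : EuclideanSpace ℝ (Fin n) |
        0 ≤ ⟪-(‖w‖⁻¹ • w), z - x₀⟫} := by
      apply isClosed_le continuous_const
      exact (continuous_const.inner (continuous_id.sub continuous_const))
    exact (hclosed.closure_subset_iff.2 hK) hy

variable {n : ℕ}
local notation "E" => EuclideanSpace ℝ (Fin n)

noncomputable def quadPhi (a c m : ℝ) (b ν x₀ : E) : E → ℝ :=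
  fun x => a + ⟪b, x - x₀⟫_ℝ + c * ⟪x - x₀, x - x₀⟫_ℝ - m * ⟪ν, x - x₀⟫_ℝ ^ 2

noncomputable def quadD (c m : ℝ) (b ν x₀ : E) (x : E) : E →L[ℝ] ℝ :=
  innerSL ℝ b + (2*c) • innerSL ℝ (x - x₀) + (-(2*m*⟪ν, x - x₀⟫_ℝ)) • innerSL ℝ ν

noncomputable def quadT (c m : ℝ) (ν : E) : E →L[ℝ] E →L[ℝ] ℝ :=
  LinearMap.toContinuousLinearMap
    { toFun := fun v => (2*c) • innerSL ℝ v + (-(2*m*⟪ν, v⟫_ℝ)) • innerSL ℝ ν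
      map_add' := by
        intro v w
        ext z
        simp only [ContinuousLinearMap.add_apply, ContinuousLinearMap.coe_smul',
          Pi.smul_apply, innerSL_apply_apply, smul_eq_mul, inner_add_left, inner_add_right]
        ring
      map_smul' := by
        intro r v
        ext z
        simp only [ContinuousLinearMap.add_apply, ContinuousLinearMap.coe_smul',
          Pi.smul_apply, innerSL_apply_apply, smul_eq_mul, inner_smul_left, inner_smul_right,
          RingHom.id_apply, conj_trivial]
        ring }

lemma quadT_apply (c m : ℝ) (ν : E) (v w : E) :
    quadT c m ν v w = 2*c*⟪v, w⟫_ℝ - 2*m*⟪ν, v⟫_ℝ *⟪ν, w⟫_ℝ := by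
  simp only [quadT, LinearMap.coe_toContinuousLinearMap', LinearMap.coe_mk, AddHom.coe_mk,
    ContinuousLinearMap.add_apply, ContinuousLinearMap.coe_smul', Pi.smul_apply,
    innerSL_apply_apply, smul_eq_mul]
  ring

lemma quadPhi_contDiff (a c m : ℝ) (b ν x₀ : E) : ContDiff ℝ 2 (quadPhi a c m b ν x₀) := by
  have h0 : ContDiff ℝ 2 (fun x : E => x - x₀) := contDiff_id.sub contDiff_const
  exact ((contDiff_const.add (ContDiff.inner ℝ contDiff_const h0)).add
      (contDiff_const.mul (ContDiff.inner ℝ h0 h0))).sub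
    (contDiff_const.mul ((ContDiff.inner ℝ contDiff_const h0).pow 2))

lemma quadPhi_hasFDerivAt (a c m : ℝ) (b ν x₀ x : E) :
    HasFDerivAt (quadPhi a c m b ν x₀) (quadD c m b ν x₀ x) x := by
  have h0 : HasFDerivAt (fun y : E => y - x₀) (ContinuousLinearMap.id ℝ E) x :=
    (hasFDerivAt_id x).sub_const x₀
  have h1 : HasFDerivAt (fun y : E => ⟪b, y - x₀⟫_ℝ) (innerSL ℝ b) x := by
    have := ((innerSL ℝ b).hasFDerivAt (x := x - x₀)).comp x h0
    exact this
  have h2 : HasFDerivAt (fun y : E => ⟪y - x₀, y - x₀⟫_ℝ)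
      ((2:ℝ) • innerSL ℝ (x - x₀)) x := by
    refine (HasFDerivAt.inner ℝ h0 h0).congr_fderiv ?_
    ext v
    simp only [ContinuousLinearMap.coe_comp', Function.comp_apply,
      ContinuousLinearMap.prod_apply, ContinuousLinearMap.coe_id', id_eq,
      fderivInnerCLM_apply, ContinuousLinearMap.coe_smul', Pi.smul_apply,
      innerSL_apply_apply, smul_eq_mul]
    rw [real_inner_comm v (x - x₀)]
    ring
  have h3 : HasFDerivAt (fun y : E => ⟪ν, y - x₀⟫_ℝ ^ 2)
      ((2*⟪ν, x - x₀⟫_ℝ) • innerSL ℝ ν) x := by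
    have hq : HasFDerivAt (fun y : E => ⟪ν, y - x₀⟫_ℝ) (innerSL ℝ ν) x := by
      have := ((innerSL ℝ ν).hasFDerivAt (x := x - x₀)).comp x h0
      exact this
    have := hq.mul hq
    have h3' : HasFDerivAt (fun y : E => ⟪ν, y - x₀⟫_ℝ * ⟪ν, y - x₀⟫_ℝ)
        ((2*⟪ν, x - x₀⟫_ℝ) • innerSL ℝ ν) x := by
      refine this.congr_fderiv ?_
      ext v
      simp only [ContinuousLinearMap.add_apply, ContinuousLinearMap.coe_smul',
        Pi.smul_apply, innerSL_apply_apply, smul_eq_mul]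
      ring
    simpa only [pow_two] using h3'
  have := (((hasFDerivAt_const a x).add h1).add (h2.const_mul c)).sub (h3.const_mul m)
  refine this.congr_fderiv ?_
  ext v
  simp only [quadD, ContinuousLinearMap.add_apply, ContinuousLinearMap.coe_smul',
    Pi.smul_apply, innerSL_apply_apply, smul_eq_mul, ContinuousLinearMap.coe_sub',
    Pi.sub_apply, ContinuousLinearMap.coe_zero, Pi.zero_apply, zero_add]
  ring

lemma quadPhi_fderiv (a c m : ℝ) (b ν x₀ : E) :
    fderiv ℝ (quadPhi a c m b ν x₀) = quadD c m b ν x₀ := by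
  funext x
  exact (quadPhi_hasFDerivAt a c m b ν x₀ x).fderiv

lemma quadPhi_gradient (a c m : ℝ) (b ν x₀ : E) :
    gradient (quadPhi a c m b ν x₀) x₀ = b := by
  rw [gradient, quadPhi_fderiv]
  have : quadD c m b ν x₀ x₀ = innerSL ℝ b := by
    ext v; simp [quadD]
  rw [this]
  have : innerSL ℝ b = InnerProductSpace.toDual ℝ E b := by
    ext v; simp [InnerProductSpace.toDual_apply_apply]
  rw [this, LinearIsometryEquiv.symm_apply_apply]

lemma quadPhi_snd_fderiv (a c m : ℝ) (b ν x₀ : E) :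
    fderiv ℝ (fderiv ℝ (quadPhi a c m b ν x₀)) x₀ = quadT c m ν := by
  rw [quadPhi_fderiv]
  have heq : (quadD c m b ν x₀ : E → E →L[ℝ] ℝ)
      = fun x => innerSL ℝ b + quadT c m ν (x - x₀) := by
    funext x
    ext v
    simp only [ContinuousLinearMap.add_apply]
    rw [quadT_apply]
    simp only [quadD, ContinuousLinearMap.add_apply, ContinuousLinearMap.coe_smul',
      Pi.smul_apply, innerSL_apply_apply, smul_eq_mul]
    ring
  rw [heq]
  have h0 : HasFDerivAt (fun y : E => y - x₀) (ContinuousLinearMap.id ℝ E) x₀ :=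
    (hasFDerivAt_id x₀).sub_const x₀
  have h1 : HasFDerivAt (fun x : E => innerSL ℝ b + quadT c m ν (x - x₀))
      (quadT c m ν) x₀ := by
    have heq2 : (fun x : E => innerSL ℝ b + quadT c m ν (x - x₀))
        = fun x : E => (innerSL ℝ b - quadT c m ν x₀) + quadT c m ν x := by
      funext x; rw [map_sub]; abel
    rw [heq2]
    simpa using ((quadT c m ν).hasFDerivAt (x := x₀))
  exact h1.fderiv

lemma quadPhi_hessian (a c m : ℝ) (b ν x₀ : E) (i j : Fin n) :
    iteratedFDeriv ℝ 2 (quadPhi a c m b ν x₀) x₀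
      ![EuclideanSpace.single i 1, EuclideanSpace.single j 1]
      = 2*c*(if i = j then (1:ℝ) else 0) - 2*m*(ν i * ν j) := by
  rw [iteratedFDeriv_two_apply]
  show fderiv ℝ (fderiv ℝ (quadPhi a c m b ν x₀)) x₀
      (EuclideanSpace.single i 1) (EuclideanSpace.single j 1) = _
  rw [quadPhi_snd_fderiv, quadT_apply]
  simp only [EuclideanSpace.inner_single_left, EuclideanSpace.inner_single_right,
    conj_trivial, one_mul, mul_one, EuclideanSpace.single_apply]
  by_cases h : i = j
  · subst h; simp; ring
  · simp [h, Ne.symm h]; ring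


lemma trace_eq_sum_eigenvalues {A : Matrix (Fin n) (Fin n) ℝ} (hA : A.IsHermitian) :
    ∑ i, hA.eigenvalues i = A.trace := by
  rw [hA.trace_eq_sum_eigenvalues]
  simp

lemma pucci_neg (hn : 0 < n) (lam Lam c m : ℝ) (hlam : 0 < lam) (hle : lam ≤ Lam)
    (hc : 0 < c) (hm0 : 0 ≤ m) (ν : EuclideanSpace ℝ (Fin n)) (hν : ‖ν‖ = 1)
    (hm : (Lam - lam/n) * (2*c*n) + (lam/n) * (2*c*n - 2*m) < 0) :
    pucciSup (lam/n) Lam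
      (Matrix.of fun i j => 2*c*(if i = j then (1:ℝ) else 0) - 2*m*(ν i * ν j)) < 0 := by
  set A : Matrix (Fin n) (Fin n) ℝ :=
    Matrix.of fun i j => 2*c*(if i = j then (1:ℝ) else 0) - 2*m*(ν i * ν j) with hAdef
  have hA : A.IsHermitian := by
    rw [Matrix.IsHermitian]
    ext i j
    simp only [Matrix.conjTranspose_apply, hAdef, Matrix.of_apply, star_trivial]
    rcases eq_or_ne i j with rfl | h
    · ring
    · simp only [if_neg h, if_neg (Ne.symm h)]; ring
  have hν2 : ∑ i, ν i * ν i = 1 := by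
    have h1 : ⟪ν, ν⟫_ℝ = ‖ν‖ ^ 2 := real_inner_self_eq_norm_sq ν
    rw [hν] at h1
    rw [one_pow, PiLp.inner_apply] at h1
    simpa only [RCLike.inner_apply, conj_trivial] using h1
  -- trace
  have htrace : ∑ i, hA.eigenvalues i = 2*c*n - 2*m := by
    rw [trace_eq_sum_eigenvalues hA, Matrix.trace]
    have hdiag : ∀ i, A.diag i = 2*c - 2*m*(ν i * ν i) := by
      intro i; simp [hAdef, Matrix.diag_apply]
    have h2 : ∑ i : Fin n, 2*m*(ν i * ν i) = 2*m := by
      rw [← Finset.mul_sum, hν2, mul_one]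
    rw [Finset.sum_congr rfl (fun i _ => hdiag i), Finset.sum_sub_distrib, h2]
    simp [Finset.sum_const, nsmul_eq_mul]
    ring
  -- eigenvalue upper bound
  have hev : ∀ i, hA.eigenvalues i ≤ 2*c := by
    intro i
    set v : EuclideanSpace ℝ (Fin n) := hA.eigenvectorBasis i with hv
    have hnorm : ‖v‖ = 1 := hA.eigenvectorBasis.orthonormal.1 i
    have hv2 : ∑ k, v k * v k = 1 := by
      have h1 : ⟪v, v⟫_ℝ = ‖v‖ ^ 2 := real_inner_self_eq_norm_sq v
      rw [hnorm] at h1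
      rw [one_pow, PiLp.inner_apply] at h1
      simpa only [RCLike.inner_apply, conj_trivial] using h1
    have he : hA.eigenvalues i = dotProduct (star (v : Fin n → ℝ)) (A.mulVec v) := by
      simpa using hA.eigenvalues_eq i
    have hmv : ∀ k, (A.mulVec (v : Fin n → ℝ)) k
        = 2*c*(v k) - 2*m*(ν k) * (∑ j, ν j * v j) := by
      intro k
      simp only [Matrix.mulVec, dotProduct, hAdef, Matrix.of_apply]
      rw [Finset.sum_congr rfl (fun j _ => by ring :
        ∀ j ∈ Finset.univ, (2*c*(if k = j then (1:ℝ) else 0) - 2*m*(ν k * ν j)) * v j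
          = 2*c*((if k = j then (1:ℝ) else 0) * v j) - 2*m*(ν k)*(ν j * v j))]
      rw [Finset.sum_sub_distrib, ← Finset.mul_sum, ← Finset.mul_sum]
      simp [Finset.sum_ite_eq]
    have hdot : dotProduct (star (v : Fin n → ℝ)) (A.mulVec v)
        = 2*c - 2*m*(∑ j, ν j * v j)^2 := by
      simp only [dotProduct, Pi.star_apply, star_trivial]
      rw [Finset.sum_congr rfl (fun k _ => by rw [hmv k])]
      rw [Finset.sum_congr rfl (fun k _ => by ring :
        ∀ k ∈ Finset.univ, v k * (2*c*(v k) - 2*m*(ν k) * (∑ j, ν j * v j))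
          = 2*c*(v k * v k) - (2*m*(∑ j, ν j * v j))*(ν k * v k))]
      rw [Finset.sum_sub_distrib, ← Finset.mul_sum, ← Finset.mul_sum, hv2]
      ring
    rw [he, hdot]
    have : 0 ≤ 2*m*(∑ j, ν j * v j)^2 := by positivity
    linarith
  -- assemble
  rw [pucciSup, dif_pos hA]
  have hcast : (1:ℝ) ≤ n := by exact_mod_cast hn
  have hln : 0 < lam / n := by positivity
  have hmax_le : ∑ i, max (hA.eigenvalues i) 0 ≤ n * (2*c) := by
    calc ∑ i, max (hA.eigenvalues i) 0 ≤ ∑ i : Fin n, 2*c :=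
          Finset.sum_le_sum (fun i _ => max_le (hev i) (by linarith))
      _ = n * (2*c) := by simp [Finset.sum_const, mul_comm]
  have hmax_nonneg : 0 ≤ ∑ i, max (hA.eigenvalues i) 0 :=
    Finset.sum_nonneg (fun i _ => le_max_right _ _)
  have hmin_eq : ∑ i, min (hA.eigenvalues i) 0
      = (2*c*n - 2*m) - ∑ i, max (hA.eigenvalues i) 0 := by
    rw [← htrace, ← Finset.sum_sub_distrib]
    exact Finset.sum_congr rfl (fun i _ => by rcases le_or_gt (hA.eigenvalues i) 0 with h | h
      <;> simp [min_def, max_def, h, le_of_lt, not_le] <;> linarith)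
  rw [hmin_eq]
  have hΛ : 0 ≤ Lam - lam / n := by
    have : lam / n ≤ lam := by
      rw [div_le_iff₀ (by linarith : (0:ℝ) < n)]
      nlinarith
    linarith
  nlinarith [mul_le_mul_of_nonneg_left hmax_le hΛ]

end Aux

theorem neumann_test_class_reduction {n : ℕ} (hn : 0 < n)
    (lam Lam : ℝ) (hlam : 0 < lam) (hle : lam ≤ Lam)
    (K : Set (EuclideanSpace ℝ (Fin n))) (hKopen : IsOpen K) (hKconv : Convex ℝ K)
    (hKne : K.Nonempty)
    (x₀ : EuclideanSpace ℝ (Fin n))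
    (hx₀ : x₀ ∈ frontier K ∩ Metric.ball 0 1)
    (u : EuclideanSpace ℝ (Fin n) → ℝ)
    (hu : ContinuousOn u (closure K ∩ Metric.ball 0 1))
    -- u satisfies the Neumann condition tested against the restricted class:
    -- strict touching from above, −∇ψ(x₀) interior to the tangent cone, and
    -- M⁺_{λ/n,Λ}(D²ψ(x₀)) < 0:
    (hrestricted : ∀ ψ : EuclideanSpace ℝ (Fin n) → ℝ, ContDiffAt ℝ 2 ψ x₀ →
      u x₀ = ψ x₀ →
      (∀ᶠ x in nhdsWithin x₀ ((closure K ∩ Metric.ball 0 1) \ {x₀}), u x < ψ x) →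
      -gradient ψ x₀ ∈ interior (tangentConeOf K x₀) →
      pucciSup (lam / n) Lam (hessianMatrix ψ x₀) < 0 → False) :
    -- then u satisfies it for the full class of C² test functions touching from above:
    ∀ ψ : EuclideanSpace ℝ (Fin n) → ℝ, ContDiffAt ℝ 2 ψ x₀ →
      u x₀ = ψ x₀ →
      (∀ᶠ x in nhdsWithin x₀ (closure K ∩ Metric.ball 0 1), u x ≤ ψ x) →
      -gradient ψ x₀ ∈ interior (tangentConeOf K x₀) → False := by
  intro ψ hψC2 hval htouch hgrad
  obtain ⟨C, hCpos, hTaylor⟩ := taylor_upper ψ x₀ hψC2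
  obtain ⟨ν, hν1, hνK⟩ := exists_inner_normal K hKopen hKconv hKne x₀ hx₀.1
  set g := gradient ψ x₀ with hg
  obtain ⟨δ, hδpos, hδball⟩ := Metric.isOpen_iff.1 isOpen_interior (-g) hgrad
  set c := C + 1 with hcdef
  have hcpos : 0 < c := by linarith
  have hn1 : (1:ℝ) ≤ n := by exact_mod_cast hn
  have hnpos : (0:ℝ) < n := by linarith
  have hln : 0 < lam / n := by positivity
  have hLam : 0 < Lam := lt_of_lt_of_le hlam hle
  set m : ℝ := (n:ℝ)/lam * (Lam * (2*c*n)) + c*n + 1 with hmdef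
  have hm0 : 0 ≤ m := by positivity
  have hmpos : 0 < m := by positivity
  have hkey : (lam/n) * (2*m) = 2*(Lam*(2*c*n)) + (lam/n)*(2*c*n) + 2*(lam/n) := by
    rw [hmdef]
    field_simp
  have hpucci_ineq : (Lam - lam/n)*(2*c*n) + (lam/n)*(2*c*n - 2*m) < 0 := by
    have h1 : 0 < Lam*(2*c*n) := by positivity
    have h2 : 0 < (lam/n)*(2*c*n) := by positivity
    have expand : (Lam - lam/n)*(2*c*n) + (lam/n)*(2*c*n - 2*m)
        = Lam*(2*c*n) - lam/n*(2*m) := by ring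
    rw [expand, hkey]
    nlinarith [h1, h2, hln]
  set ε : ℝ := δ/2 with hεdef
  have hεpos : 0 < ε := by positivity
  have hεδ : ε < δ := by rw [hεdef]; linarith
  set φ := quadPhi (ψ x₀) c m (g + ε • ν) ν x₀ with hφdef
  refine hrestricted φ ((quadPhi_contDiff _ _ _ _ _ _).contDiffAt) ?_ ?_ ?_ ?_
  · rw [hval]
    simp [hφdef, quadPhi]
  · -- strict touching from above
    have h1 : ∀ᶠ x in nhdsWithin x₀ ((closure K ∩ Metric.ball 0 1) \ {x₀}), u x ≤ ψ x :=
      htouch.filter_mono (nhdsWithin_mono x₀ Set.diff_subset)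
    have h2 : ∀ᶠ x in nhdsWithin x₀ ((closure K ∩ Metric.ball 0 1) \ {x₀}),
        ψ x ≤ ψ x₀ + fderiv ℝ ψ x₀ (x - x₀) + C * ‖x - x₀‖ ^ 2 :=
      hTaylor.filter_mono nhdsWithin_le_nhds
    have h3 : ∀ᶠ x in nhdsWithin x₀ ((closure K ∩ Metric.ball 0 1) \ {x₀}),
        ‖x - x₀‖ < ε/m := by
      refine Filter.Eventually.filter_mono nhdsWithin_le_nhds ?_
      have : 0 < ε/m := by positivity
      filter_upwards [Metric.ball_mem_nhds x₀ this] with x hx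
      simpa [dist_eq_norm] using hx
    have h4 : ∀ᶠ x in nhdsWithin x₀ ((closure K ∩ Metric.ball 0 1) \ {x₀}),
        x ∈ (closure K ∩ Metric.ball 0 1) \ {x₀} := self_mem_nhdsWithin
    filter_upwards [h1, h2, h3, h4] with x hx1 hx2 hx3 hx4
    have hxK : x ∈ closure K := hx4.1.1
    have hxne : x ≠ x₀ := by simpa using hx4.2
    have hnormpos : 0 < ‖x - x₀‖ := by
      rw [norm_pos_iff]
      exact sub_ne_zero.2 hxne
    set t : ℝ := ⟪ν, x - x₀⟫_ℝ with htdef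
    have ht0 : 0 ≤ t := hνK x hxK
    have htle : t ≤ ‖x - x₀‖ := by
      calc t ≤ ‖ν‖ * ‖x - x₀‖ := real_inner_le_norm _ _
        _ = ‖x - x₀‖ := by rw [hν1, one_mul]
    have hmt : m * t < ε := by
      calc m * t ≤ m * ‖x - x₀‖ := mul_le_mul_of_nonneg_left htle hm0
        _ < m * (ε/m) := by exact mul_lt_mul_of_pos_left hx3 hmpos
        _ = ε := by field_simp
    have hεt : 0 ≤ ε*t - m*t^2 := by
      have h := mul_nonneg ht0 (sub_nonneg.2 hmt.le)
      have hid : ε*t - m*t^2 = t*(ε - m*t) := by ring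
      rw [hid]; exact h
    have hfd : fderiv ℝ ψ x₀ (x - x₀) = ⟪g, x - x₀⟫_ℝ := by
      rw [hg, gradient]
      exact (InnerProductSpace.toDual_symm_apply).symm
    have hnorm2 : ⟪x - x₀, x - x₀⟫_ℝ = ‖x - x₀‖^2 := real_inner_self_eq_norm_sq _
    have hφx : φ x = ψ x₀ + ⟪g, x - x₀⟫_ℝ + ε*t + c*‖x - x₀‖^2 - m*t^2 := by
      simp only [hφdef, quadPhi, inner_add_left, real_inner_smul_left, hnorm2, ← htdef]
      ring
    rw [hφx]
    rw [hfd] at hx2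
    have hsq : 0 < ‖x - x₀‖^2 := by positivity
    have := le_trans hx1 hx2
    rw [hcdef]
    linarith [this, hεt, hsq]
  · -- gradient condition
    rw [hφdef, quadPhi_gradient]
    apply hδball
    rw [Metric.mem_ball, dist_eq_norm]
    have : -(g + ε • ν) - -g = -(ε • ν) := by abel
    rw [this, norm_neg, norm_smul, hν1, mul_one, Real.norm_eq_abs, abs_of_pos hεpos]
    exact hεδ
  · -- Pucci condition
    have hhess : hessianMatrix φ x₀
        = Matrix.of fun i j => 2*c*(if i = j then (1:ℝ) else 0) - 2*m*(ν i * ν j) := by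
      funext i j
      exact quadPhi_hessian (ψ x₀) c m (g + ε • ν) ν x₀ i j
    rw [hhess]
    exact pucci_neg hn lam Lam c m hlam hle hcpos hm0 ν hν1 hpucci_ineq
end
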